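/- arXiv:math/0703472 — 2 statements merged into one kernel-verified Lean document; each statement's English description precedes it below -/
import Mathlib

section
/- The function Q is G-invariant (Q(g.μ) = Q(μ) for all g ∈ G and nonzero μ ∈ V_n), Q(μ) > 0 for every nonzero μ ∈ V_n, and Λ(g.μ) = g·Λ(μ)·g⁻¹ for every nonzero μ ∈ V_n and g ∈ G. -/
open scoped BigOperators
open Matrix

noncomputable section

/-- An element of `V_n`, i.e. a bilinear map ℝⁿ×ℝⁿ→ℝⁿ, encoded by its structure
constants `μ i j k = ⟨μ(e_i,e_j), e_k⟩`. -/
abbrev Vn (n : ℕ) : Type := Fin n → Fin n → Fin n → ℝ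

variable {n : ℕ}

/-- skew-symmetry, i.e. membership in `V_n` = Λ²(ℝⁿ)*⊗ℝⁿ. -/
def IsSkew (μ : Vn n) : Prop := ∀ i j k, μ i j k = - μ j i k

/-- The bilinear map μ : ℝⁿ×ℝⁿ→ℝⁿ associated to the structure constants. -/
def brkt (μ : Vn n) (x y : Fin n → ℝ) : Fin n → ℝ := fun k => ∑ i, ∑ j, x i * y j * μ i j k

/-- The inner product ⟨α,β⟩ = tr(αβᵀ) on n×n matrices. -/
def innM (α β : Matrix (Fin n) (Fin n) ℝ) : ℝ := (α * βᵀ).trace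

/-- ‖β‖² for the trace inner product. -/
def normsqM (β : Matrix (Fin n) (Fin n) ℝ) : ℝ := innM β β

/-- ‖β‖ for the trace inner product. -/
def normM (β : Matrix (Fin n) (Fin n) ℝ) : ℝ := Real.sqrt (normsqM β)

/-- The inner product on V_n: ⟨μ,λ⟩ = Σ_{ijk} μ_{ij}^k λ_{ij}^k. -/
def innV (μ lam : Vn n) : ℝ := ∑ i, ∑ j, ∑ k, μ i j k * lam i j k

/-- The weight α_{ij}^k = E_kk − E_ii − E_jj. -/
def wt (i j k : Fin n) : Matrix (Fin n) (Fin n) ℝ :=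
  Matrix.single k k 1 - Matrix.single i i 1 - Matrix.single j j 1

/-- The GL(n,ℝ)-action on V_n: (g.μ)(X,Y) = g μ(g⁻¹X, g⁻¹Y), in structure constants. -/
def act (g : GL (Fin n) ℝ) (μ : Vn n) : Vn n := fun i j k =>
  ∑ p, ∑ q, ∑ r, (↑g⁻¹ : Matrix (Fin n) (Fin n) ℝ) p i *
    (↑g⁻¹ : Matrix (Fin n) (Fin n) ℝ) q j * (↑g : Matrix (Fin n) (Fin n) ℝ) k r * μ p q r

/-- The infinitesimal action π(α)μ = αμ(·,·) − μ(α·,·) − μ(·,α·), as an endomorphism of V_n. -/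
def piEnd (α : Matrix (Fin n) (Fin n) ℝ) : Module.End ℝ (Vn n) where
  toFun μ := fun i j k =>
    (∑ r, α k r * μ i j r) - (∑ p, α p i * μ p j k) - (∑ q, α q j * μ i q k)
  map_add' μ ν := by
    funext i j k
    simp [mul_add, Finset.sum_add_distrib]
    ring
  map_smul' a μ := by
    funext i j k
    simp only [Pi.smul_apply, smul_eq_mul, RingHom.id_apply, Finset.mul_sum, mul_sub]
    simp [mul_comm, mul_left_comm]


/-- conjugation gαg⁻¹ of a matrix by an element of GL. -/
def mconj (g : GL (Fin n) ℝ) (α : Matrix (Fin n) (Fin n) ℝ) : Matrix (Fin n) (Fin n) ℝ :=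
  (↑g : Matrix (Fin n) (Fin n) ℝ) * α * (↑g⁻¹ : Matrix (Fin n) (Fin n) ℝ)

/-- The set D of diagonalizable matrices, D = ∪_{g∈G} g 𝔱 g⁻¹. -/
def DiagSet : Set (Matrix (Fin n) (Fin n) ℝ) :=
  {α | ∃ g : GL (Fin n) ℝ, ∃ δ : Matrix (Fin n) (Fin n) ℝ, δ.IsDiag ∧
    α = mconj g δ}

/-- m(μ,α): the smallest eigenvalue of π(α) such that the projection of μ onto the
corresponding eigenspace is nonzero (for diagonalizable α, the projection onto the
eigenspace of r is nonzero iff μ is not in the sum of the other eigenspaces). -/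
def mFun (μ : Vn n) (α : Matrix (Fin n) (Fin n) ℝ) : ℝ :=
  sInf {r : ℝ | μ ∉ ⨆ (a : ℝ) (_ : a ≠ r), Module.End.eigenspace (piEnd α) a}

/-- q(α) = tr(α²). -/
def qF (α : Matrix (Fin n) (Fin n) ℝ) : ℝ := (α * α).trace

/-- Q(μ) = inf{q(α) : α ∈ D, m(μ,α) ≥ 1}. -/
def QF (μ : Vn n) : ℝ := sInf {x : ℝ | ∃ α ∈ DiagSet (n := n), 1 ≤ mFun μ α ∧ x = qF α}

/-- Λ(μ) = {β ∈ D : q(β) = Q(μ), m(μ,β) ≥ 1}. -/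
def LambdaF (μ : Vn n) : Set (Matrix (Fin n) (Fin n) ℝ) :=
  {β | β ∈ DiagSet (n := n) ∧ qF β = QF μ ∧ 1 ≤ mFun μ β}

/-- m(μ,α) for diagonal α: min{⟨α,α_ij^k⟩ : μ_ij^k ≠ 0}. -/
def mT (μ : Vn n) (α : Matrix (Fin n) (Fin n) ℝ) : ℝ :=
  sInf {x : ℝ | ∃ i j k, μ i j k ≠ 0 ∧ x = innM α (wt i j k)}

/-- Q_T(μ) = inf{‖α‖² : α ∈ 𝔱, m(μ,α) ≥ 1}. -/
def QT (μ : Vn n) : ℝ :=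
  sInf {x : ℝ | ∃ α : Matrix (Fin n) (Fin n) ℝ, α.IsDiag ∧ 1 ≤ mT μ α ∧ x = normsqM α}

/-- Λ_T(μ) = {β ∈ 𝔱 : ‖β‖² = Q_T(μ), m(μ,β) ≥ 1}. -/
def LambdaT (μ : Vn n) : Set (Matrix (Fin n) (Fin n) ℝ) :=
  {β | β.IsDiag ∧ normsqM β = QT μ ∧ 1 ≤ mT μ β}

/-- The set of weights {α_ij^k : μ_ij^k ≠ 0}. -/
def wtSet (μ : Vn n) : Set (Matrix (Fin n) (Fin n) ℝ) :=
  {w | ∃ i j k, μ i j k ≠ 0 ∧ w = wt i j k}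

/-- β_μ: the minimal convex combination of {α_ij^k : μ_ij^k ≠ 0}, i.e. the unique vector of
minimal norm in the convex hull of this set. -/
def betaMu (μ : Vn n) : Matrix (Fin n) (Fin n) ℝ :=
  Classical.epsilon fun β => β ∈ convexHull ℝ (wtSet μ) ∧
    ∀ γ ∈ convexHull ℝ (wtSet μ), normsqM β ≤ normsqM γ

/-- The stratum S_β = {μ ∈ V_n∖{0} : β is an element of maximal norm in {β_{g.μ} : g ∈ G}}. -/
def SS (β : Matrix (Fin n) (Fin n) ℝ) : Set (Vn n) :=
  {μ | μ ≠ 0 ∧ IsSkew μ ∧ (∃ g : GL (Fin n) ℝ, betaMu (act g μ) = β) ∧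
    ∀ g : GL (Fin n) ℝ, normM (betaMu (act g μ)) ≤ normM β}

/-- W_β = {μ ∈ V_n : ⟨β,α_ij^k⟩ ≥ ‖β‖² whenever μ_ij^k ≠ 0}. -/
def Wset (β : Matrix (Fin n) (Fin n) ℝ) : Set (Vn n) :=
  {μ | IsSkew μ ∧ ∀ i j k, μ i j k ≠ 0 → normsqM β ≤ innM β (wt i j k)}

/-- Z_β = {μ ∈ V_n : ⟨β,α_ij^k⟩ = ‖β‖² whenever μ_ij^k ≠ 0}. -/
def Zset (β : Matrix (Fin n) (Fin n) ℝ) : Set (Vn n) :=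
  {μ | IsSkew μ ∧ ∀ i j k, μ i j k ≠ 0 → innM β (wt i j k) = normsqM β}

/-- Y_β = {μ ∈ W_β : ⟨β,α_ij^k⟩ = ‖β‖² for at least one μ_ij^k ≠ 0}. -/
def Yset (β : Matrix (Fin n) (Fin n) ℝ) : Set (Vn n) :=
  {μ | μ ∈ Wset β ∧ ∃ i j k, μ i j k ≠ 0 ∧ innM β (wt i j k) = normsqM β}

/-- The closed Weyl chamber: diagonal matrices with nondecreasing diagonal entries. -/
def upperT : Set (Matrix (Fin n) (Fin n) ℝ) :=
  {α | α.IsDiag ∧ Monotone fun i => α i i}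

/-- B = {β ∈ closure(𝔱⁺) : S_β ≠ ∅}. -/
def Bset : Set (Matrix (Fin n) (Fin n) ℝ) := {β | β ∈ upperT (n := n) ∧ (SS β).Nonempty}

/-- Der(μ) = {α : π(α)μ = 0}. -/
def Der (μ : Vn n) : Set (Matrix (Fin n) (Fin n) ℝ) := {α | piEnd α μ = 0}

/-- The subgroup of lower triangular invertible matrices. -/
def lowerTriGL : Set (GL (Fin n) ℝ) :=
  {g | ∀ i j : Fin n, i < j → (↑g : Matrix (Fin n) (Fin n) ℝ) i j = 0}

/-- The parabolic subgroup P_α = B₀ G_α attached to α ∈ closure(𝔱⁺). -/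
def Pgroup (α : Matrix (Fin n) (Fin n) ℝ) : Set (GL (Fin n) ℝ) :=
  {p | ∃ b ∈ lowerTriGL (n := n), ∃ h : GL (Fin n) ℝ,
    mconj h α = α ∧ p = b * h}

/-- The parabolic subgroup P_{α'} = g P_α g⁻¹ attached to a diagonalizable matrix
α' = gαg⁻¹, α ∈ closure(𝔱⁺)  (this is independent of the chosen representation). -/
def PgroupD (α' : Matrix (Fin n) (Fin n) ℝ) : Set (GL (Fin n) ℝ) :=
  {p | ∃ g : GL (Fin n) ℝ, ∃ α ∈ upperT (n := n),
    α' = mconj g α ∧ p ∈ (fun h => g * h * g⁻¹) '' Pgroup α}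

/-- membership in O(n). -/
def IsOrth (g : GL (Fin n) ℝ) : Prop := (↑g : Matrix (Fin n) (Fin n) ℝ)ᵀ * (↑g : Matrix (Fin n) (Fin n) ℝ) = 1

/-- The orthogonal projection p_β : W_β → Z_β (in coordinates: it keeps exactly the
coefficients whose weight pairs to ‖β‖² with β). -/
def pproj (β : Matrix (Fin n) (Fin n) ℝ) (μ : Vn n) : Vn n :=
  fun i j k => if innM β (wt i j k) = normsqM β then μ i j k else 0

/-- H_β: the connected subgroup of G whose Lie algebra 𝔥_β is the orthogonal complement
of β inside 𝔤_β = {α : αβ = βα}, realized as the subgroup generated by exponentials. -/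
def Hgrp (β : Matrix (Fin n) (Fin n) ℝ) : Subgroup (GL (Fin n) ℝ) :=
  Subgroup.closure {g | ∃ α : Matrix (Fin n) (Fin n) ℝ,
    α * β = β * α ∧ innM α β = 0 ∧ (↑g : Matrix (Fin n) (Fin n) ℝ) = NormedSpace.exp α}

/-- μ is H_β-semistable if 0 is not in the closure of the orbit H_β.μ. -/
def Semistable (β : Matrix (Fin n) (Fin n) ℝ) (μ : Vn n) : Prop :=
  (0 : Vn n) ∉ closure ((fun g => act g μ) '' ((Hgrp β : Subgroup (GL (Fin n) ℝ)) : Set (GL (Fin n) ℝ)))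

/-- The Jacobi identity for the bilinear map attached to μ. -/
def IsJacobi (μ : Vn n) : Prop :=
  ∀ x y z : Fin n → ℝ,
    brkt μ (brkt μ x y) z + brkt μ (brkt μ y z) x + brkt μ (brkt μ z x) y = 0

/-- Iterated (left-normed) brackets ad x₁ ∘ … ∘ ad x_m (y). -/
def iterBr (μ : Vn n) : List (Fin n → ℝ) → (Fin n → ℝ) → (Fin n → ℝ)
  | [], y => y
  | x :: l, y => brkt μ x (iterBr μ l y)

/-- Nilpotency: some length of iterated brackets vanishes identically. -/
def IsNilp (μ : Vn n) : Prop :=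
  ∃ m : ℕ, ∀ l : List (Fin n → ℝ), l.length = m → ∀ y, iterBr μ l y = 0

/-- N: the set of nilpotent Lie brackets in V_n. -/
def Nset : Set (Vn n) := {μ | IsSkew μ ∧ IsJacobi μ ∧ IsNilp μ}


/-! ### Auxiliary development for Lemma 2.4 -/

section Aux

/-- Auxiliary contraction operator generalizing both `act` and the pieces of `piEnd`. -/
def TT (A B C : Matrix (Fin n) (Fin n) ℝ) (μ : Vn n) : Vn n :=
  fun i j k => ∑ p, ∑ q, ∑ r, A p i * B q j * C k r * μ p q r

lemma sum_swap6 {M : Type*} [AddCommMonoid M]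
    (f : Fin n → Fin n → Fin n → Fin n → Fin n → Fin n → M) :
    ∑ a, ∑ b, ∑ c, ∑ d, ∑ e, ∑ x, f a b c d e x
      = ∑ d, ∑ e, ∑ x, ∑ a, ∑ b, ∑ c, f a b c d e x := by
  have key : ∑ s : Fin n × Fin n × Fin n, ∑ t : Fin n × Fin n × Fin n,
      f s.1 s.2.1 s.2.2 t.1 t.2.1 t.2.2
      = ∑ t : Fin n × Fin n × Fin n, ∑ s : Fin n × Fin n × Fin n,
      f s.1 s.2.1 s.2.2 t.1 t.2.1 t.2.2 := Finset.sum_comm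
  simpa [Fintype.sum_prod_type] using key

lemma sum_rev3 {M : Type*} [AddCommMonoid M] (f : Fin n → Fin n → Fin n → M) :
    ∑ a, ∑ b, ∑ c, f a b c = ∑ c, ∑ b, ∑ a, f a b c :=
  calc ∑ a, ∑ b, ∑ c, f a b c
      = ∑ b, ∑ a, ∑ c, f a b c := Finset.sum_comm
    _ = ∑ b, ∑ c, ∑ a, f a b c := Finset.sum_congr rfl fun b _ => Finset.sum_comm
    _ = ∑ c, ∑ b, ∑ a, f a b c := Finset.sum_comm

lemma TT_comp (A B C A' B' C' : Matrix (Fin n) (Fin n) ℝ) (μ : Vn n) :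
    TT A B C (TT A' B' C' μ) = TT (A' * A) (B' * B) (C * C') μ := by
  funext i j k
  calc (TT A B C (TT A' B' C' μ)) i j k
      = ∑ p, ∑ q, ∑ r, ∑ p', ∑ q', ∑ r',
          A p i * B q j * C k r * (A' p' p * B' q' q * C' r r' * μ p' q' r') := by
        simp only [TT, Finset.mul_sum]
    _ = ∑ p', ∑ q', ∑ r', ∑ p, ∑ q, ∑ r,
          A p i * B q j * C k r * (A' p' p * B' q' q * C' r r' * μ p' q' r') :=
        sum_swap6 _
    _ = ∑ p', ∑ q', ∑ r', ∑ r, ∑ q, ∑ p,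
          A p i * B q j * C k r * (A' p' p * B' q' q * C' r r' * μ p' q' r') := by
        refine Finset.sum_congr rfl fun p' _ => ?_
        refine Finset.sum_congr rfl fun q' _ => ?_
        refine Finset.sum_congr rfl fun r' _ => ?_
        exact sum_rev3 _
    _ = (TT (A' * A) (B' * B) (C * C') μ) i j k := by
        simp only [TT, Matrix.mul_apply, Finset.sum_mul, Finset.mul_sum]
        refine Finset.sum_congr rfl fun p' _ => ?_
        refine Finset.sum_congr rfl fun q' _ => ?_
        refine Finset.sum_congr rfl fun r' _ => ?_
        refine Finset.sum_congr rfl fun p _ => ?_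
        refine Finset.sum_congr rfl fun q _ => ?_
        refine Finset.sum_congr rfl fun r _ => ?_
        ring

lemma TT_one (μ : Vn n) : TT 1 1 1 μ = μ := by
  funext i j k
  simp [TT, Matrix.one_apply]

lemma TT_add (A B C : Matrix (Fin n) (Fin n) ℝ) (μ ν : Vn n) :
    TT A B C (μ + ν) = TT A B C μ + TT A B C ν := by
  funext i j k
  simp [TT, mul_add, Finset.sum_add_distrib]

lemma TT_sub (A B C : Matrix (Fin n) (Fin n) ℝ) (μ ν : Vn n) :
    TT A B C (μ - ν) = TT A B C μ - TT A B C ν := by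
  funext i j k
  simp [TT, mul_sub, Finset.sum_sub_distrib]

lemma TT_smul (A B C : Matrix (Fin n) (Fin n) ℝ) (a : ℝ) (μ : Vn n) :
    TT A B C (a • μ) = a • TT A B C μ := by
  funext i j k
  simp only [TT, Pi.smul_apply, smul_eq_mul, Finset.mul_sum]
  refine Finset.sum_congr rfl fun p _ => ?_
  refine Finset.sum_congr rfl fun q _ => ?_
  refine Finset.sum_congr rfl fun r _ => ?_
  ring

lemma TT_11C (C : Matrix (Fin n) (Fin n) ℝ) (μ : Vn n) :
    TT 1 1 C μ = fun i j k => ∑ r, C k r * μ i j r := by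
  funext i j k
  simp [TT, Matrix.one_apply]

lemma TT_A11 (A : Matrix (Fin n) (Fin n) ℝ) (μ : Vn n) :
    TT A 1 1 μ = fun i j k => ∑ p, A p i * μ p j k := by
  funext i j k
  simp [TT, Matrix.one_apply]

lemma TT_1B1 (B : Matrix (Fin n) (Fin n) ℝ) (μ : Vn n) :
    TT 1 B 1 μ = fun i j k => ∑ q, B q j * μ i q k := by
  funext i j k
  simp [TT, Matrix.one_apply]

lemma piEnd_apply (α : Matrix (Fin n) (Fin n) ℝ) (μ : Vn n) (i j k : Fin n) :
    piEnd α μ i j k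
      = (∑ r, α k r * μ i j r) - (∑ p, α p i * μ p j k) - (∑ q, α q j * μ i q k) := rfl

lemma piEnd_TT (α : Matrix (Fin n) (Fin n) ℝ) (μ : Vn n) :
    piEnd α μ = TT 1 1 α μ - TT α 1 1 μ - TT 1 α 1 μ := by
  funext i j k
  rw [piEnd_apply, TT_11C, TT_A11, TT_1B1]
  rfl

lemma act_TT (g : GL (Fin n) ℝ) (μ : Vn n) :
    act g μ = TT (↑g⁻¹) (↑g⁻¹) (↑g) μ := rfl

lemma act_act (g h : GL (Fin n) ℝ) (μ : Vn n) :
    act g (act h μ) = act (g * h) μ := by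
  rw [act_TT, act_TT, act_TT, TT_comp, _root_.mul_inv_rev, Units.val_mul, Units.val_mul]

lemma act_one (μ : Vn n) : act (1 : GL (Fin n) ℝ) μ = μ := by
  rw [act_TT, inv_one, Units.val_one, TT_one]

lemma act_inv_act (g : GL (Fin n) ℝ) (μ : Vn n) : act g⁻¹ (act g μ) = μ := by
  rw [act_act, inv_mul_cancel, act_one]

lemma act_act_inv (g : GL (Fin n) ℝ) (μ : Vn n) : act g (act g⁻¹ μ) = μ := by
  rw [act_act, mul_inv_cancel, act_one]

lemma act_smul (g : GL (Fin n) ℝ) (a : ℝ) (μ : Vn n) :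
    act g (a • μ) = a • act g μ := by
  rw [act_TT, act_TT, TT_smul]

lemma act_injective (g : GL (Fin n) ℝ) : Function.Injective (act (n := n) g) := by
  intro u v h
  have := congrArg (act g⁻¹) h
  rwa [act_inv_act, act_inv_act] at this

/-- `act g` as a linear equivalence of `Vn n`. -/
def actE (g : GL (Fin n) ℝ) : Vn n ≃ₗ[ℝ] Vn n where
  toFun := act g
  invFun := act g⁻¹
  map_add' μ ν := by
    show act g (μ + ν) = act g μ + act g ν
    rw [act_TT, act_TT, act_TT, TT_add]
  map_smul' a μ := by
    show act g (a • μ) = a • act g μ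
    exact act_smul g a μ
  left_inv μ := act_inv_act g μ
  right_inv μ := act_act_inv g μ

lemma actE_symm_apply (g : GL (Fin n) ℝ) (μ : Vn n) : (actE g).symm μ = act g⁻¹ μ := rfl

lemma GLcoe_inv_mul (g : GL (Fin n) ℝ) :
    ((g⁻¹ : GL (Fin n) ℝ) : Matrix (Fin n) (Fin n) ℝ)
      * ((g : GL (Fin n) ℝ) : Matrix (Fin n) (Fin n) ℝ) = 1 := Units.inv_mul g

lemma piEnd_conj (g : GL (Fin n) ℝ) (α : Matrix (Fin n) (Fin n) ℝ) (μ : Vn n) :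
    piEnd (mconj g α) (act g μ) = act g (piEnd α μ) := by
  have h1 := GLcoe_inv_mul g
  have e1 : mconj g α * ((g : GL (Fin n) ℝ) : Matrix (Fin n) (Fin n) ℝ)
      = ((g : GL (Fin n) ℝ) : Matrix (Fin n) (Fin n) ℝ) * α := by
    rw [mconj, mul_assoc, h1, mul_one]
  have e2 : ((g⁻¹ : GL (Fin n) ℝ) : Matrix (Fin n) (Fin n) ℝ) * mconj g α
      = α * ((g⁻¹ : GL (Fin n) ℝ) : Matrix (Fin n) (Fin n) ℝ) := by
    rw [mconj, ← mul_assoc, ← mul_assoc, h1, one_mul]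
  rw [piEnd_TT, piEnd_TT, act_TT, act_TT, TT_sub, TT_sub, TT_comp, TT_comp, TT_comp,
    TT_comp, TT_comp, TT_comp]
  simp only [mul_one, one_mul, e1, e2]

lemma eig_conj (g : GL (Fin n) ℝ) (α : Matrix (Fin n) (Fin n) ℝ) (a : ℝ) :
    Module.End.eigenspace (piEnd (mconj g α)) a
      = Submodule.map (actE (n := n) g : Vn n →ₗ[ℝ] Vn n)
          (Module.End.eigenspace (piEnd α) a) := by
  ext x
  rw [Submodule.mem_map_equiv, Module.End.mem_eigenspace_iff, Module.End.mem_eigenspace_iff,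
    actE_symm_apply]
  have hxy : act g (act g⁻¹ x) = x := act_act_inv g x
  constructor
  · intro h
    apply act_injective g
    rw [act_smul, hxy, ← piEnd_conj, hxy, h]
  · intro h
    rw [← hxy, piEnd_conj, h, act_smul, hxy]

lemma mFun_conj (g : GL (Fin n) ℝ) (α : Matrix (Fin n) (Fin n) ℝ) (μ : Vn n) :
    mFun (act g μ) (mconj g α) = mFun μ α := by
  unfold mFun
  congr 1
  ext r
  have hsup : (⨆ (a : ℝ) (_ : a ≠ r), Module.End.eigenspace (piEnd (mconj g α)) a)
      = Submodule.map (actE (n := n) g : Vn n →ₗ[ℝ] Vn n)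
          (⨆ (a : ℝ) (_ : a ≠ r), Module.End.eigenspace (piEnd α) a) := by
    rw [Submodule.map_iSup]
    refine iSup_congr fun a => ?_
    rw [Submodule.map_iSup]
    exact iSup_congr fun ha => eig_conj g α a
  simp only [Set.mem_setOf_eq, hsup, Submodule.mem_map_equiv, actE_symm_apply, act_inv_act]

lemma mconj_mconj (g h : GL (Fin n) ℝ) (δ : Matrix (Fin n) (Fin n) ℝ) :
    mconj g (mconj h δ) = mconj (g * h) δ := by
  simp [mconj, _root_.mul_inv_rev, Units.val_mul, Matrix.mul_assoc]

lemma mconj_one (δ : Matrix (Fin n) (Fin n) ℝ) : mconj (1 : GL (Fin n) ℝ) δ = δ := by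
  simp [mconj]

lemma mconj_cancel (g : GL (Fin n) ℝ) (β : Matrix (Fin n) (Fin n) ℝ) :
    mconj g (mconj g⁻¹ β) = β := by
  rw [mconj_mconj, mul_inv_cancel, mconj_one]

lemma DiagSet_conj (g : GL (Fin n) ℝ) {α : Matrix (Fin n) (Fin n) ℝ}
    (h : α ∈ DiagSet (n := n)) : mconj g α ∈ DiagSet (n := n) := by
  obtain ⟨h', δ, hδ, rfl⟩ := h
  exact ⟨g * h', δ, hδ, mconj_mconj g h' δ⟩

lemma qF_conj (g : GL (Fin n) ℝ) (α : Matrix (Fin n) (Fin n) ℝ) :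
    qF (mconj g α) = qF α := by
  have h1 := GLcoe_inv_mul g
  have h2 : ∀ x : Matrix (Fin n) (Fin n) ℝ,
      ((g⁻¹ : GL (Fin n) ℝ) : Matrix (Fin n) (Fin n) ℝ)
        * (((g : GL (Fin n) ℝ) : Matrix (Fin n) (Fin n) ℝ) * x) = x := by
    intro x
    rw [← mul_assoc, h1, one_mul]
  have e : mconj g α * mconj g α
      = ((g : GL (Fin n) ℝ) : Matrix (Fin n) (Fin n) ℝ)
          * (α * α * ((g⁻¹ : GL (Fin n) ℝ) : Matrix (Fin n) (Fin n) ℝ)) := by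
    simp only [mconj, mul_assoc, h2]
  unfold qF
  rw [e, Matrix.trace_mul_comm, mul_assoc, h1, mul_one]

lemma mFun_act_eq (g : GL (Fin n) ℝ) (α : Matrix (Fin n) (Fin n) ℝ) (μ : Vn n) :
    mFun μ (mconj g α) = mFun (act g⁻¹ μ) α := by
  have := mFun_conj g α (act g⁻¹ μ)
  rwa [act_act_inv] at this

lemma QFset_conj (g : GL (Fin n) ℝ) (μ : Vn n) :
    {x : ℝ | ∃ α ∈ DiagSet (n := n), 1 ≤ mFun (act g μ) α ∧ x = qF α}
      = {x : ℝ | ∃ α ∈ DiagSet (n := n), 1 ≤ mFun μ α ∧ x = qF α} := by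
  ext x
  simp only [Set.mem_setOf_eq]
  constructor
  · rintro ⟨α, hD, hm, rfl⟩
    refine ⟨mconj g⁻¹ α, DiagSet_conj g⁻¹ hD, ?_, (qF_conj g⁻¹ α).symm⟩
    rw [mFun_act_eq, inv_inv]
    exact hm
  · rintro ⟨α, hD, hm, rfl⟩
    refine ⟨mconj g α, DiagSet_conj g hD, ?_, (qF_conj g α).symm⟩
    rwa [mFun_conj]

lemma QF_act (g : GL (Fin n) ℝ) (μ : Vn n) : QF (act g μ) = QF μ := by
  unfold QF
  rw [QFset_conj]

/-! ### Positivity -/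

lemma qF_diag_sum (δ : Matrix (Fin n) (Fin n) ℝ) (hδ : δ.IsDiag) :
    qF δ = ∑ i, δ i i ^ 2 := by
  unfold qF
  rw [Matrix.trace]
  refine Finset.sum_congr rfl fun i _ => ?_
  rw [Matrix.diag_apply, Matrix.mul_apply, Finset.sum_eq_single i]
  · ring
  · intro b _ hb
    rw [hδ hb, mul_zero]
  · intro h
    exact absurd (Finset.mem_univ i) h

lemma abs_diag_le (δ : Matrix (Fin n) (Fin n) ℝ) (hδ : δ.IsDiag) (m : Fin n) :
    |δ m m| ≤ Real.sqrt (qF δ) := by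
  have h0 : δ m m ^ 2 ≤ qF δ := by
    rw [qF_diag_sum δ hδ]
    exact Finset.single_le_sum (f := fun i => δ i i ^ 2) (fun i _ => sq_nonneg _)
      (Finset.mem_univ m)
  calc |δ m m| = Real.sqrt (δ m m ^ 2) := (Real.sqrt_sq_eq_abs _).symm
    _ ≤ Real.sqrt (qF δ) := Real.sqrt_le_sqrt h0

lemma piEnd_diag (δ : Matrix (Fin n) (Fin n) ℝ) (hδ : δ.IsDiag) (μ : Vn n) (i j k : Fin n) :
    piEnd δ μ i j k = (δ k k - δ i i - δ j j) * μ i j k := by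
  rw [piEnd_apply, Finset.sum_eq_single k, Finset.sum_eq_single i, Finset.sum_eq_single j]
  · ring
  · intro b _ hb; rw [hδ hb, zero_mul]
  · intro h; exact absurd (Finset.mem_univ j) h
  · intro b _ hb; rw [hδ hb, zero_mul]
  · intro h; exact absurd (Finset.mem_univ i) h
  · intro b _ hb; rw [hδ (Ne.symm hb), zero_mul]
  · intro h; exact absurd (Finset.mem_univ k) h

lemma diag_mem_sup (δ : Matrix (Fin n) (Fin n) ℝ) (hδ : δ.IsDiag) (μ : Vn n) (r : ℝ)
    (hr : ∀ i j k, μ i j k ≠ 0 → δ k k - δ i i - δ j j ≠ r) :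
    μ ∈ ⨆ (a : ℝ) (_ : a ≠ r), Module.End.eigenspace (piEnd δ) a := by
  classical
  set c : Fin n → Fin n → Fin n → ℝ := fun i j k => δ k k - δ i i - δ j j with hc
  set A : Finset ℝ :=
    Finset.image (fun t : Fin n × Fin n × Fin n => c t.1 t.2.1 t.2.2) Finset.univ with hA
  set pr : ℝ → Vn n := fun a i j k => if c i j k = a then μ i j k else 0 with hpr
  have hdecomp : μ = ∑ a ∈ A, pr a := by
    funext i j k
    simp only [Finset.sum_apply]
    rw [hpr]
    simp only []
    rw [Finset.sum_ite_eq A (c i j k) fun _ => μ i j k]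
    rw [if_pos]
    exact Finset.mem_image.mpr ⟨(i, j, k), Finset.mem_univ _, rfl⟩
  rw [hdecomp]
  refine Submodule.sum_mem _ fun a ha => ?_
  by_cases hz : pr a = 0
  · rw [hz]; exact Submodule.zero_mem _
  · have hmem : pr a ∈ Module.End.eigenspace (piEnd δ) a := by
      rw [Module.End.mem_eigenspace_iff]
      funext i j k
      rw [piEnd_diag δ hδ]
      show c i j k * pr a i j k = (a • pr a) i j k
      simp only [Pi.smul_apply, smul_eq_mul, hpr]
      by_cases h : c i j k = a
      · simp [h]
      · simp [h]
    have hwit : ∃ i j k, pr a i j k ≠ 0 := by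
      by_contra hcon
      push_neg at hcon
      exact hz (by funext i j k; exact hcon i j k)
    obtain ⟨i, j, k, hijk⟩ := hwit
    have hca : c i j k = a := by
      by_contra h
      exact hijk (by simp [hpr, h])
    have hμijk : μ i j k ≠ 0 := by
      intro h
      exact hijk (by simp [hpr, h])
    have hne : a ≠ r := hca ▸ hr i j k hμijk
    exact Submodule.mem_iSup_of_mem a (Submodule.mem_iSup_of_mem hne hmem)

lemma qF_ge_of_diag (δ : Matrix (Fin n) (Fin n) ℝ) (hδ : δ.IsDiag) (ν : Vn n)
    (h1 : 1 ≤ mFun ν δ) : (1 : ℝ) / 9 ≤ qF δ := by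
  classical
  set S : Set ℝ :=
    {r : ℝ | ν ∉ ⨆ (a : ℝ) (_ : a ≠ r), Module.End.eigenspace (piEnd δ) a} with hS
  have hmf : mFun ν δ = sInf S := rfl
  have hSsub : S ⊆ {x : ℝ | ∃ i j k, ν i j k ≠ 0 ∧ x = δ k k - δ i i - δ j j} := by
    intro r hrS
    by_contra hcon
    apply hrS
    refine diag_mem_sup δ hδ ν r fun i j k hν heq => ?_
    exact hcon ⟨i, j, k, hν, heq.symm⟩
  have hfin : ({x : ℝ | ∃ i j k, ν i j k ≠ 0 ∧ x = δ k k - δ i i - δ j j}).Finite := by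
    apply Set.Finite.subset
      (Set.finite_range fun t : Fin n × Fin n × Fin n => δ t.2.2 t.2.2 - δ t.1 t.1 - δ t.2.1 t.2.1)
    rintro x ⟨i, j, k, -, rfl⟩
    exact ⟨(i, j, k), rfl⟩
  have hbdd : BddBelow S := (hfin.subset hSsub).bddBelow
  have hSne : S.Nonempty := by
    rcases Set.eq_empty_or_nonempty S with h | h
    · rw [hmf, h, Real.sInf_empty] at h1
      norm_num at h1
    · exact h
  obtain ⟨r, hrS⟩ := hSne
  have hr1 : 1 ≤ r := le_trans h1 (hmf ▸ csInf_le hbdd hrS)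
  obtain ⟨i, j, k, hν, hrc⟩ := hSsub hrS
  have hq0 : 0 ≤ qF δ := by
    rw [qF_diag_sum δ hδ]
    positivity
  have hsk := abs_diag_le δ hδ k
  have hsi := abs_diag_le δ hδ i
  have hsj := abs_diag_le δ hδ j
  have h3 : (1 : ℝ) ≤ 3 * Real.sqrt (qF δ) := by
    have a1 : δ k k ≤ |δ k k| := le_abs_self _
    have a2 : -δ i i ≤ |δ i i| := neg_le_abs _
    have a3 : -δ j j ≤ |δ j j| := neg_le_abs _
    rw [hrc] at hr1
    linarith
  have h4 : (1 : ℝ) / 3 ≤ Real.sqrt (qF δ) := by linarith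
  nlinarith [Real.sq_sqrt hq0]

lemma piEnd_negone (ν : Vn n) : piEnd (-1 : Matrix (Fin n) (Fin n) ℝ) ν = ν := by
  funext i j k
  have h := piEnd_diag (-1 : Matrix (Fin n) (Fin n) ℝ) (Matrix.isDiag_one (n := Fin n)).neg ν i j k
  rw [h]
  simp [Matrix.one_apply]

lemma mFun_negone (μ : Vn n) (hμ : μ ≠ 0) : mFun μ (-1 : Matrix (Fin n) (Fin n) ℝ) = 1 := by
  have heig : ∀ a : ℝ, a ≠ 1 →
      Module.End.eigenspace (piEnd (-1 : Matrix (Fin n) (Fin n) ℝ)) a = ⊥ := by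
    intro a ha
    ext x
    rw [Module.End.mem_eigenspace_iff, piEnd_negone, Submodule.mem_bot]
    constructor
    · intro h
      have h2 : (1 - a) • x = 0 := by
        rw [sub_smul, one_smul, sub_eq_zero]
        exact h
      rcases smul_eq_zero.mp h2 with h3 | h3
      · exact absurd (by linarith [sub_eq_zero.mp h3] : a = 1) ha
      · exact h3
    · rintro rfl; simp
  have heig1 : Module.End.eigenspace (piEnd (-1 : Matrix (Fin n) (Fin n) ℝ)) 1 = ⊤ := by
    ext x
    rw [Module.End.mem_eigenspace_iff, piEnd_negone]
    simp
  have hset : {r : ℝ | μ ∉ ⨆ (a : ℝ) (_ : a ≠ r),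
      Module.End.eigenspace (piEnd (-1 : Matrix (Fin n) (Fin n) ℝ)) a} = {1} := by
    ext r
    simp only [Set.mem_setOf_eq, Set.mem_singleton_iff]
    constructor
    · intro h
      by_contra hr
      apply h
      have hle : Module.End.eigenspace (piEnd (-1 : Matrix (Fin n) (Fin n) ℝ)) 1
          ≤ ⨆ (a : ℝ) (_ : a ≠ r),
              Module.End.eigenspace (piEnd (-1 : Matrix (Fin n) (Fin n) ℝ)) a :=
        le_iSup_of_le 1 (le_iSup_of_le (Ne.symm hr) le_rfl)
      exact hle (heig1 ▸ Submodule.mem_top)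
    · rintro rfl
      intro hmem
      have hle : (⨆ (a : ℝ) (_ : a ≠ (1 : ℝ)),
          Module.End.eigenspace (piEnd (-1 : Matrix (Fin n) (Fin n) ℝ)) a) ≤ ⊥ := by
        refine iSup_le fun a => iSup_le fun ha => ?_
        rw [heig a ha]
      exact hμ ((Submodule.mem_bot ℝ).mp (hle hmem))
  rw [mFun, hset, csInf_singleton]

lemma negone_mem_DiagSet : (-1 : Matrix (Fin n) (Fin n) ℝ) ∈ DiagSet (n := n) :=
  ⟨1, -1, (Matrix.isDiag_one (n := Fin n)).neg, (mconj_one _).symm⟩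

lemma qF_negone : qF (-1 : Matrix (Fin n) (Fin n) ℝ) = (n : ℝ) := by
  unfold qF
  rw [neg_one_mul, neg_neg, Matrix.trace_one]
  simp

lemma QF_pos (μ : Vn n) (hμ : μ ≠ 0) : 0 < QF μ := by
  have hmem : (n : ℝ) ∈ {x : ℝ | ∃ α ∈ DiagSet (n := n), 1 ≤ mFun μ α ∧ x = qF α} :=
    ⟨-1, negone_mem_DiagSet, le_of_eq (mFun_negone μ hμ).symm, qF_negone.symm⟩
  have hlb : ∀ x ∈ {x : ℝ | ∃ α ∈ DiagSet (n := n), 1 ≤ mFun μ α ∧ x = qF α},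
      (1 : ℝ) / 9 ≤ x := by
    rintro x ⟨α, ⟨g, δ, hδ, rfl⟩, hm, rfl⟩
    rw [qF_conj]
    refine qF_ge_of_diag δ hδ (act g⁻¹ μ) ?_
    rwa [mFun_act_eq] at hm
  have : (1 : ℝ) / 9 ≤ QF μ := le_csInf ⟨(n : ℝ), hmem⟩ hlb
  linarith

end Aux


/-- **Lemma 2.4.** Q is G-invariant, Q(μ) > 0 for μ ≠ 0, and Λ(g.μ) = gΛ(μ)g⁻¹. -/
theorem Q_invariant_pos_Lambda_equivariant {n : ℕ} :
    (∀ μ : Vn n, μ ≠ 0 → IsSkew μ → ∀ g : GL (Fin n) ℝ, QF (act g μ) = QF μ) ∧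
    (∀ μ : Vn n, μ ≠ 0 → IsSkew μ → 0 < QF μ) ∧
    (∀ μ : Vn n, μ ≠ 0 → IsSkew μ → ∀ g : GL (Fin n) ℝ,
      LambdaF (act g μ) = mconj g '' LambdaF μ) := by
  refine ⟨fun μ hμ _ g => QF_act g μ, fun μ hμ _ => QF_pos μ hμ, fun μ hμ _ g => ?_⟩
  ext β
  simp only [LambdaF, Set.mem_setOf_eq, Set.mem_image]
  constructor
  · rintro ⟨hD, hq, hm⟩
    refine ⟨mconj g⁻¹ β, ⟨DiagSet_conj g⁻¹ hD, ?_, ?_⟩, mconj_cancel g β⟩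
    · rw [qF_conj, hq, QF_act]
    · rw [mFun_act_eq, inv_inv]
      exact hm
  · rintro ⟨α, ⟨hD, hq, hm⟩, rfl⟩
    refine ⟨DiagSet_conj g hD, ?_, ?_⟩
    · rw [qF_conj, hq, QF_act]
    · rw [mFun_conj]
      exact hm


end
end

section
/- V_n ∖ {0} is the disjoint union of the strata S_β over β ∈ B; that is, every nonzero μ ∈ V_n belongs to S_β for exactly one β in the closed Weyl chamber closure(𝔱⁺). -/
open scoped BigOperators
open Matrix

noncomputable section

variable {n : ℕ}

namespace Strata

variable {n : ℕ}

lemma innM_eq_sum (α β : Matrix (Fin n) (Fin n) ℝ) : innM α β = ∑ i, ∑ j, α i j * β i j := by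
  simp [innM, Matrix.trace, Matrix.mul_apply, Matrix.diag, Matrix.transpose_apply]

lemma innM_eq_sum' (α β : Matrix (Fin n) (Fin n) ℝ) :
    innM α β = ∑ p : Fin n × Fin n, α p.1 p.2 * β p.1 p.2 := by
  rw [innM_eq_sum]
  exact (Fintype.sum_prod_type (f := fun p : Fin n × Fin n => α p.1 p.2 * β p.1 p.2)).symm

lemma innM_comm (α β : Matrix (Fin n) (Fin n) ℝ) : innM α β = innM β α := by
  simp [innM_eq_sum, mul_comm]

lemma innM_add_left (α β γ : Matrix (Fin n) (Fin n) ℝ) :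
    innM (α + β) γ = innM α γ + innM β γ := by
  simp [innM_eq_sum, add_mul, Finset.sum_add_distrib]

lemma innM_add_right (α β γ : Matrix (Fin n) (Fin n) ℝ) :
    innM α (β + γ) = innM α β + innM α γ := by
  simp [innM_eq_sum, mul_add, Finset.sum_add_distrib]

lemma innM_smul_right (a : ℝ) (α β : Matrix (Fin n) (Fin n) ℝ) :
    innM α (a • β) = a * innM α β := by
  simp [innM_eq_sum, Finset.mul_sum, Matrix.smul_apply]
  ring_nf
  congr 1; funext i; congr 1; funext j; ring

lemma innM_smul_left (a : ℝ) (α β : Matrix (Fin n) (Fin n) ℝ) :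
    innM (a • α) β = a * innM α β := by
  rw [innM_comm, innM_smul_right, innM_comm]

lemma innM_sub_left (α β γ : Matrix (Fin n) (Fin n) ℝ) :
    innM (α - β) γ = innM α γ - innM β γ := by
  simp [innM_eq_sum, sub_mul, Finset.sum_sub_distrib]

lemma innM_sub_right (α β γ : Matrix (Fin n) (Fin n) ℝ) :
    innM α (β - γ) = innM α β - innM α γ := by
  simp [innM_eq_sum, mul_sub, Finset.sum_sub_distrib]

lemma isLinearMap_innM (v : Matrix (Fin n) (Fin n) ℝ) :
    IsLinearMap ℝ (fun x => innM v x) :=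
  ⟨fun x y => innM_add_right v x y, fun a x => innM_smul_right a v x⟩

lemma normsqM_nonneg (β : Matrix (Fin n) (Fin n) ℝ) : 0 ≤ normsqM β := by
  rw [normsqM, innM_eq_sum]
  exact Finset.sum_nonneg fun i _ => Finset.sum_nonneg fun j _ => mul_self_nonneg _

lemma normsqM_eq_zero_iff (β : Matrix (Fin n) (Fin n) ℝ) : normsqM β = 0 ↔ β = 0 := by
  constructor
  · intro h
    ext i j
    rw [normsqM, innM_eq_sum] at h
    have h1 : ∀ i ∈ Finset.univ (α := Fin n), (0:ℝ) ≤ ∑ j, β i j * β i j :=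
      fun i _ => Finset.sum_nonneg fun j _ => mul_self_nonneg _
    have h2 := (Finset.sum_eq_zero_iff_of_nonneg h1).1 h i (Finset.mem_univ i)
    have h3 := (Finset.sum_eq_zero_iff_of_nonneg
      (fun j _ => mul_self_nonneg (β i j))).1 h2 j (Finset.mem_univ j)
    simpa [mul_self_eq_zero] using h3
  · rintro rfl; simp [normsqM, innM_eq_sum]

lemma normM_nonneg (β : Matrix (Fin n) (Fin n) ℝ) : 0 ≤ normM β := Real.sqrt_nonneg _

lemma normM_sq (β : Matrix (Fin n) (Fin n) ℝ) : normM β ^ 2 = normsqM β := by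
  rw [normM, Real.sq_sqrt (normsqM_nonneg β)]

lemma normM_le_normM_iff (α β : Matrix (Fin n) (Fin n) ℝ) :
    normM α ≤ normM β ↔ normsqM α ≤ normsqM β := by
  rw [normM, normM]
  constructor
  · intro h
    nlinarith [Real.sq_sqrt (normsqM_nonneg α), Real.sq_sqrt (normsqM_nonneg β),
      Real.sqrt_nonneg (normsqM α), Real.sqrt_nonneg (normsqM β)]
  · exact fun h => Real.sqrt_le_sqrt h

lemma normM_eq_zero_iff (β : Matrix (Fin n) (Fin n) ℝ) : normM β = 0 ↔ β = 0 := by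
  rw [normM, Real.sqrt_eq_zero (normsqM_nonneg β), normsqM_eq_zero_iff]

lemma normsq_expand (α δ : Matrix (Fin n) (Fin n) ℝ) (t : ℝ) :
    normsqM (α + t • δ) = normsqM α + 2 * t * innM α δ + t ^ 2 * normsqM δ := by
  simp only [normsqM, innM_add_left, innM_add_right, innM_smul_left, innM_smul_right,
    innM_comm δ α]
  ring

lemma normsq_add (α β : Matrix (Fin n) (Fin n) ℝ) :
    normsqM (α + β) = normsqM α + 2 * innM α β + normsqM β := by
  have := normsq_expand α β 1
  simpa using this

lemma normsq_sub (α β : Matrix (Fin n) (Fin n) ℝ) :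
    normsqM (α - β) = normsqM α - 2 * innM α β + normsqM β := by
  have h : α - β = α + (-1:ℝ) • β := by rw [neg_one_smul]; exact sub_eq_add_neg α β
  rw [h, normsq_expand]; ring

lemma innM_cauchySchwarz (α β : Matrix (Fin n) (Fin n) ℝ) :
    innM α β ≤ normM α * normM β := by
  have h := Finset.sum_mul_sq_le_sq_mul_sq Finset.univ
    (fun p : Fin n × Fin n => α p.1 p.2) (fun p : Fin n × Fin n => β p.1 p.2)
  have h1 : innM α β ^ 2 ≤ normsqM α * normsqM β := by
    rw [innM_eq_sum', normsqM, normsqM, innM_eq_sum', innM_eq_sum']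
    simpa [sq] using h
  have h2 : innM α β ^ 2 ≤ (normM α * normM β) ^ 2 := by
    rw [mul_pow, normM_sq, normM_sq]; exact h1
  have h3 : 0 ≤ normM α * normM β := mul_nonneg (normM_nonneg α) (normM_nonneg β)
  nlinarith [h2, h3]

end Strata
namespace Strata

variable {n : ℕ}

lemma hull_inner_ge {S : Set (Matrix (Fin n) (Fin n) ℝ)} {v : Matrix (Fin n) (Fin n) ℝ} {c : ℝ}
    (h : ∀ w ∈ S, c ≤ innM v w) : ∀ x ∈ convexHull ℝ S, c ≤ innM v x := by
  intro x hx
  have hsub : S ⊆ {w | c ≤ innM v w} := h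
  exact convexHull_min hsub (convex_halfSpace_ge (isLinearMap_innM v) c) hx

def IsMinPt (S : Set (Matrix (Fin n) (Fin n) ℝ)) (β : Matrix (Fin n) (Fin n) ℝ) : Prop :=
  β ∈ convexHull ℝ S ∧ ∀ γ ∈ convexHull ℝ S, normsqM β ≤ normsqM γ

lemma continuous_normsqM : Continuous (normsqM (n := n)) := by
  have h : (normsqM (n := n)) = fun β => ∑ i, ∑ j, β i j * β i j := by
    funext β; rw [normsqM, innM_eq_sum]
  rw [h]
  refine continuous_finset_sum _ (fun i _ => continuous_finset_sum _ (fun j _ => ?_))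
  exact (continuous_id.matrix_elem i j).mul (continuous_id.matrix_elem i j)

lemma exists_isMinPt {S : Set (Matrix (Fin n) (Fin n) ℝ)} (hfin : S.Finite) (hne : S.Nonempty) :
    ∃ β, IsMinPt S β := by
  have hcomp : IsCompact (convexHull ℝ S) := hfin.isCompact_convexHull ℝ
  have hne' : (convexHull ℝ S).Nonempty := hne.mono (subset_convexHull ℝ S)
  obtain ⟨β, hβ, hmin⟩ := hcomp.exists_isMinOn hne' continuous_normsqM.continuousOn
  exact ⟨β, hβ, fun γ hγ => (isMinOn_iff.mp hmin) γ hγ⟩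

lemma normsqM_smul (a : ℝ) (β : Matrix (Fin n) (Fin n) ℝ) :
    normsqM (a • β) = a ^ 2 * normsqM β := by
  rw [normsqM, innM_smul_left, innM_smul_right, normsqM]; ring

lemma isMinPt_unique {S : Set (Matrix (Fin n) (Fin n) ℝ)} {β γ : Matrix (Fin n) (Fin n) ℝ}
    (hβ : IsMinPt S β) (hγ : IsMinPt S γ) : β = γ := by
  by_contra hne
  have hmem : (1/2 : ℝ) • β + (1/2 : ℝ) • γ ∈ convexHull ℝ S :=
    (convex_convexHull ℝ S) hβ.1 hγ.1 (by norm_num) (by norm_num) (by norm_num)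
  have he : normsqM β = normsqM γ := le_antisymm (hβ.2 γ hγ.1) (hγ.2 β hβ.1)
  have hd : 0 < normsqM (β - γ) := by
    rcases lt_or_eq_of_le (normsqM_nonneg (β - γ)) with h | h
    · exact h
    · exact absurd (sub_eq_zero.mp ((normsqM_eq_zero_iff _).mp h.symm)) hne
  have e1 := normsq_add ((1/2:ℝ) • β) ((1/2:ℝ) • γ)
  have e2 : innM ((1/2:ℝ) • β) ((1/2:ℝ) • γ) = (1/4) * innM β γ := by
    rw [innM_smul_left, innM_smul_right]; ring
  have e3 := normsq_sub β γ
  have e4 : normsqM ((1/2:ℝ) • β) = (1/4) * normsqM β := by rw [normsqM_smul]; ring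
  have e5 : normsqM ((1/2:ℝ) • γ) = (1/4) * normsqM γ := by rw [normsqM_smul]; ring
  have hlt : normsqM ((1/2:ℝ) • β + (1/2:ℝ) • γ) < normsqM β := by
    rw [e1, e2, e4, e5]; linarith
  exact absurd (hβ.2 _ hmem) (not_le.mpr hlt)

lemma isMinPt_inner {S : Set (Matrix (Fin n) (Fin n) ℝ)} {β : Matrix (Fin n) (Fin n) ℝ}
    (hβ : IsMinPt S β) {γ : Matrix (Fin n) (Fin n) ℝ} (hγ : γ ∈ convexHull ℝ S) :
    normsqM β ≤ innM β γ := by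
  by_contra hlt
  push_neg at hlt
  set δ := γ - β with hδ
  have hd : innM β δ < 0 := by
    rw [hδ, innM_sub_right]
    have : innM β β = normsqM β := rfl
    linarith
  have hq : 0 ≤ normsqM δ := normsqM_nonneg δ
  have hqpos : 0 < normsqM δ := by
    rcases lt_or_eq_of_le hq with h | h
    · exact h
    · exfalso
      have hδ0 : δ = 0 := (normsqM_eq_zero_iff δ).mp h.symm
      have : γ = β := by rw [hδ] at hδ0; exact sub_eq_zero.mp hδ0
      rw [this] at hlt
      have : innM β β = normsqM β := rfl
      linarith
  set q := normsqM δ with hqdef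
  set t := min 1 (-(innM β δ) / q) with htdef
  have ht0 : 0 < t := lt_min one_pos (div_pos (neg_pos.mpr hd) hqpos)
  have ht1 : t ≤ 1 := min_le_left _ _
  have hcombo : β + t • δ = (1 - t) • β + t • γ := by
    rw [hδ, smul_sub, sub_smul, one_smul]; abel
  have hmem : β + t • δ ∈ convexHull ℝ S := by
    rw [hcombo]
    exact (convex_convexHull ℝ S) hβ.1 hγ (by linarith) (le_of_lt ht0) (by ring)
  have hmin := hβ.2 _ hmem
  rw [normsq_expand] at hmin
  have htq : t * q ≤ -(innM β δ) := by
    have h1 : t ≤ -(innM β δ) / q := min_le_right _ _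
    calc t * q ≤ (-(innM β δ) / q) * q := mul_le_mul_of_nonneg_right h1 hq
      _ = -(innM β δ) := by field_simp
  nlinarith [hmin, htq, ht0, hd]

lemma wtSet_finite (μ : Vn n) : (wtSet μ).Finite := by
  have h : wtSet μ ⊆ Set.range fun t : Fin n × Fin n × Fin n => wt t.1 t.2.1 t.2.2 := by
    rintro w ⟨i, j, k, _, rfl⟩; exact ⟨(i, j, k), rfl⟩
  exact (Set.finite_range _).subset h

lemma exists_ne_zero_coeff {μ : Vn n} (h : μ ≠ 0) : ∃ i j k, μ i j k ≠ 0 := by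
  by_contra hc
  push_neg at hc
  exact h (by funext i j k; exact hc i j k)

lemma wtSet_nonempty {μ : Vn n} (h : μ ≠ 0) : (wtSet μ).Nonempty := by
  obtain ⟨i, j, k, hne⟩ := exists_ne_zero_coeff h
  exact ⟨wt i j k, i, j, k, hne, rfl⟩

lemma betaMu_spec {μ : Vn n} (h : μ ≠ 0) : IsMinPt (wtSet μ) (betaMu μ) := by
  have hex : ∃ β, IsMinPt (wtSet μ) β := exists_isMinPt (wtSet_finite μ) (wtSet_nonempty h)
  exact Classical.epsilon_spec hex

lemma betaMu_eq_of_isMinPt {μ : Vn n} (h : μ ≠ 0) {β : Matrix (Fin n) (Fin n) ℝ}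
    (hβ : IsMinPt (wtSet μ) β) : betaMu μ = β :=
  isMinPt_unique (betaMu_spec h) hβ

end Strata
namespace Strata

variable {n : ℕ}

def tL (A : Matrix (Fin n) (Fin n) ℝ) (μ : Vn n) : Vn n := fun i j k => ∑ p, A p i * μ p j k
def tM (A : Matrix (Fin n) (Fin n) ℝ) (μ : Vn n) : Vn n := fun i j k => ∑ q, A q j * μ i q k
def tR (B : Matrix (Fin n) (Fin n) ℝ) (μ : Vn n) : Vn n := fun i j k => ∑ r, B k r * μ i j r

lemma act_eq_t (g : GL (Fin n) ℝ) (μ : Vn n) :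
    act g μ = tL (↑g⁻¹ : Matrix (Fin n) (Fin n) ℝ) (tM (↑g⁻¹ : Matrix (Fin n) (Fin n) ℝ)
      (tR (↑g : Matrix (Fin n) (Fin n) ℝ) μ)) := by
  funext i j k
  simp only [act, tL, tM, tR, Finset.mul_sum]
  refine Finset.sum_congr rfl fun p _ => Finset.sum_congr rfl fun q _ =>
    Finset.sum_congr rfl fun r _ => by ring

lemma tL_tL (A B : Matrix (Fin n) (Fin n) ℝ) (μ : Vn n) : tL A (tL B μ) = tL (B * A) μ := by
  funext i j k
  simp only [tL, Finset.mul_sum, Matrix.mul_apply, Finset.sum_mul]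
  rw [Finset.sum_comm]
  refine Finset.sum_congr rfl fun a _ => Finset.sum_congr rfl fun p _ => by ring

lemma tM_tM (A B : Matrix (Fin n) (Fin n) ℝ) (μ : Vn n) : tM A (tM B μ) = tM (B * A) μ := by
  funext i j k
  simp only [tM, Finset.mul_sum, Matrix.mul_apply, Finset.sum_mul]
  rw [Finset.sum_comm]
  refine Finset.sum_congr rfl fun a _ => Finset.sum_congr rfl fun p _ => by ring

lemma tR_tR (A B : Matrix (Fin n) (Fin n) ℝ) (μ : Vn n) : tR A (tR B μ) = tR (A * B) μ := by
  funext i j k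
  simp only [tR, Finset.mul_sum, Matrix.mul_apply, Finset.sum_mul]
  rw [Finset.sum_comm]
  refine Finset.sum_congr rfl fun a _ => Finset.sum_congr rfl fun p _ => by ring

lemma tL_tM (A B : Matrix (Fin n) (Fin n) ℝ) (μ : Vn n) : tL A (tM B μ) = tM B (tL A μ) := by
  funext i j k
  simp only [tL, tM, Finset.mul_sum]
  rw [Finset.sum_comm]
  refine Finset.sum_congr rfl fun a _ => Finset.sum_congr rfl fun p _ => by ring

lemma tL_tR (A B : Matrix (Fin n) (Fin n) ℝ) (μ : Vn n) : tL A (tR B μ) = tR B (tL A μ) := by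
  funext i j k
  simp only [tL, tR, Finset.mul_sum]
  rw [Finset.sum_comm]
  refine Finset.sum_congr rfl fun a _ => Finset.sum_congr rfl fun p _ => by ring

lemma tM_tR (A B : Matrix (Fin n) (Fin n) ℝ) (μ : Vn n) : tM A (tR B μ) = tR B (tM A μ) := by
  funext i j k
  simp only [tM, tR, Finset.mul_sum]
  rw [Finset.sum_comm]
  refine Finset.sum_congr rfl fun a _ => Finset.sum_congr rfl fun p _ => by ring

lemma act_mul (g h : GL (Fin n) ℝ) (μ : Vn n) : act g (act h μ) = act (g * h) μ := by
  rw [act_eq_t, act_eq_t, act_eq_t]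
  rw [← tL_tR, ← tM_tR]
  rw [show tR (↑g : Matrix (Fin n) (Fin n) ℝ) (tR (↑h : Matrix (Fin n) (Fin n) ℝ) μ)
      = tR (↑(g * h) : Matrix (Fin n) (Fin n) ℝ) μ by rw [tR_tR]; norm_cast]
  rw [← tL_tM]
  rw [show ∀ ν : Vn n, tL (↑g⁻¹ : Matrix (Fin n) (Fin n) ℝ)
        (tL (↑h⁻¹ : Matrix (Fin n) (Fin n) ℝ) ν)
      = tL (↑(g * h)⁻¹ : Matrix (Fin n) (Fin n) ℝ) ν from fun ν => by
    rw [tL_tL, _root_.mul_inv_rev]; norm_cast]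
  rw [show ∀ ν : Vn n, tM (↑g⁻¹ : Matrix (Fin n) (Fin n) ℝ)
        (tM (↑h⁻¹ : Matrix (Fin n) (Fin n) ℝ) ν)
      = tM (↑(g * h)⁻¹ : Matrix (Fin n) (Fin n) ℝ) ν from fun ν => by
    rw [tM_tM, _root_.mul_inv_rev]; norm_cast]

lemma act_one (μ : Vn n) : act 1 μ = μ := by
  funext i j k
  simp [act, Matrix.one_apply]

lemma act_ne_zero {μ : Vn n} (h : μ ≠ 0) (g : GL (Fin n) ℝ) : act g μ ≠ 0 := by
  intro h0
  apply h
  have : act g⁻¹ (act g μ) = μ := by rw [act_mul, inv_mul_cancel, act_one]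
  rw [← this, h0]
  funext i j k
  simp [act]

end Strata
namespace Strata

variable {n : ℕ}

lemma wt_apply (i j k x y : Fin n) :
    wt i j k x y = (if k = x ∧ k = y then (1:ℝ) else 0) - (if i = x ∧ i = y then 1 else 0)
      - (if j = x ∧ j = y then 1 else 0) := by
  simp [wt, Matrix.single, Matrix.sub_apply]

lemma innM_std (α : Matrix (Fin n) (Fin n) ℝ) (a : Fin n) :
    innM α (Matrix.single a a 1) = α a a := by
  rw [innM_eq_sum]
  rw [Finset.sum_eq_single a]
  · rw [Finset.sum_eq_single a]
    · simp [Matrix.single]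
    · intro b _ hb
      simp [Matrix.single, Ne.symm hb]
    · intro h; exact absurd (Finset.mem_univ _) h
  · intro x _ hx
    apply Finset.sum_eq_zero
    intro y _
    simp [Matrix.single, Ne.symm hx]
  · intro h; exact absurd (Finset.mem_univ _) h

lemma innM_wt (α : Matrix (Fin n) (Fin n) ℝ) (i j k : Fin n) :
    innM α (wt i j k) = α k k - α i i - α j j := by
  rw [wt, innM_sub_right, innM_sub_right, innM_std, innM_std, innM_std]

lemma wt_isDiag (i j k : Fin n) : (wt i j k).IsDiag := by
  intro x y hxy
  rw [wt_apply]
  have h1 : ¬(k = x ∧ k = y) := fun ⟨h1, h2⟩ => hxy (h1 ▸ h2)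
  have h2 : ¬(i = x ∧ i = y) := fun ⟨h1, h2⟩ => hxy (h1 ▸ h2)
  have h3 : ¬(j = x ∧ j = y) := fun ⟨h1, h2⟩ => hxy (h1 ▸ h2)
  simp [h1, h2, h3]

lemma convex_isDiag : Convex ℝ {A : Matrix (Fin n) (Fin n) ℝ | A.IsDiag} := by
  intro x hx y hy a b _ _ _
  intro i j hij
  simp only [Matrix.add_apply, Matrix.smul_apply, hx hij, hy hij, smul_eq_mul]
  ring

lemma betaMu_isDiag {μ : Vn n} (h : μ ≠ 0) : (betaMu μ).IsDiag := by
  have hsub : wtSet μ ⊆ {A : Matrix (Fin n) (Fin n) ℝ | A.IsDiag} := by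
    rintro w ⟨i, j, k, _, rfl⟩; exact wt_isDiag i j k
  exact convexHull_min hsub convex_isDiag (betaMu_spec h).1

/-- permutation matrix -/
def permM (σ : Equiv.Perm (Fin n)) : Matrix (Fin n) (Fin n) ℝ := fun x y => if x = σ y then 1 else 0

lemma permM_mul_permM (σ τ : Equiv.Perm (Fin n)) : permM σ * permM τ = permM (σ * τ) := by
  funext x y
  rw [Matrix.mul_apply]
  simp only [permM]
  rw [Finset.sum_eq_single (τ y)]
  · simp [Equiv.Perm.mul_apply]
    split_ifs <;> simp_all
  · intro b _ hb
    rw [if_neg hb, mul_zero]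
  · intro h; exact absurd (Finset.mem_univ _) h

lemma permM_inv_cancel (σ : Equiv.Perm (Fin n)) : permM σ * permM σ⁻¹ = 1 := by
  rw [permM_mul_permM, mul_inv_cancel]
  funext x y
  simp [permM, Matrix.one_apply]
  split_ifs <;> simp_all

def permGL (σ : Equiv.Perm (Fin n)) : GL (Fin n) ℝ :=
  ⟨permM σ, permM σ⁻¹, permM_inv_cancel σ, by
    have := permM_inv_cancel σ⁻¹; rwa [inv_inv] at this⟩

lemma coe_permGL (σ : Equiv.Perm (Fin n)) : (↑(permGL σ) : Matrix (Fin n) (Fin n) ℝ) = permM σ :=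
  rfl

lemma coe_permGL_inv (σ : Equiv.Perm (Fin n)) :
    (↑(permGL σ)⁻¹ : Matrix (Fin n) (Fin n) ℝ) = permM σ⁻¹ := rfl

lemma perm_eq_iff (σ : Equiv.Perm (Fin n)) (u v : Fin n) : u = σ⁻¹ v ↔ σ u = v := by
  constructor
  · rintro rfl; exact Equiv.apply_symm_apply σ v
  · rintro rfl; exact (Equiv.symm_apply_apply σ u).symm

lemma act_permGL (σ : Equiv.Perm (Fin n)) (μ : Vn n) (i j k : Fin n) :
    act (permGL σ) μ i j k = μ (σ⁻¹ i) (σ⁻¹ j) (σ⁻¹ k) := by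
  have e : ∀ r : Fin n, (k = σ r) ↔ (r = σ⁻¹ k) := fun r => by
    rw [perm_eq_iff, eq_comm]
  simp only [act, coe_permGL, coe_permGL_inv, permM, e]
  rw [Finset.sum_eq_single (σ⁻¹ i)]
  · rw [Finset.sum_eq_single (σ⁻¹ j)]
    · rw [Finset.sum_eq_single (σ⁻¹ k)]
      · simp
      · intro r _ hr
        rw [if_neg hr]
        ring
      · intro h; exact absurd (Finset.mem_univ _) h
    · intro q _ hq
      rw [if_neg hq]
      rw [Finset.sum_eq_zero]
      intro r _
      ring
    · intro h; exact absurd (Finset.mem_univ _) h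
  · intro p _ hp
    rw [if_neg hp]
    rw [Finset.sum_eq_zero fun q _ => Finset.sum_eq_zero fun r _ => by ring]
  · intro h; exact absurd (Finset.mem_univ _) h

/-- entrywise permutation of a matrix (conjugation by the permutation matrix). -/
def pMap (σ : Equiv.Perm (Fin n)) (α : Matrix (Fin n) (Fin n) ℝ) : Matrix (Fin n) (Fin n) ℝ :=
  fun x y => α (σ⁻¹ x) (σ⁻¹ y)

lemma pMap_isLinear (σ : Equiv.Perm (Fin n)) : IsLinearMap ℝ (pMap σ) := by
  constructor
  · intro x y; funext a b; simp [pMap]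
  · intro c x; funext a b; simp [pMap]

lemma innM_pMap (σ : Equiv.Perm (Fin n)) (α β : Matrix (Fin n) (Fin n) ℝ) :
    innM (pMap σ α) (pMap σ β) = innM α β := by
  rw [innM_eq_sum, innM_eq_sum]
  rw [← Equiv.sum_comp σ⁻¹ (fun i => ∑ j, α i j * β i j)]
  refine Finset.sum_congr rfl fun i _ => ?_
  rw [← Equiv.sum_comp σ⁻¹ (fun j => α (σ⁻¹ i) j * β (σ⁻¹ i) j)]
  rfl

lemma normsqM_pMap (σ : Equiv.Perm (Fin n)) (α : Matrix (Fin n) (Fin n) ℝ) :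
    normsqM (pMap σ α) = normsqM α := innM_pMap σ α α

lemma pMap_wt (σ : Equiv.Perm (Fin n)) (a b c : Fin n) :
    pMap σ (wt a b c) = wt (σ a) (σ b) (σ c) := by
  funext x y
  show wt a b c (σ⁻¹ x) (σ⁻¹ y) = wt (σ a) (σ b) (σ c) x y
  rw [wt_apply, wt_apply]
  have key : ∀ u : Fin n, (u = σ⁻¹ x ∧ u = σ⁻¹ y) = (σ u = x ∧ σ u = y) := fun u => by
    apply propext
    rw [perm_eq_iff, perm_eq_iff]
  simp only [key]

lemma wtSet_act_permGL (σ : Equiv.Perm (Fin n)) (μ : Vn n) :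
    wtSet (act (permGL σ) μ) = pMap σ '' wtSet μ := by
  ext w
  constructor
  · rintro ⟨i, j, k, hne, rfl⟩
    rw [act_permGL] at hne
    refine ⟨wt (σ⁻¹ i) (σ⁻¹ j) (σ⁻¹ k), ⟨σ⁻¹ i, σ⁻¹ j, σ⁻¹ k, hne, rfl⟩, ?_⟩
    rw [pMap_wt]
    simp [Equiv.Perm.inv_def, Equiv.apply_symm_apply]
  · rintro ⟨w', ⟨a, b, c, hne, rfl⟩, rfl⟩
    refine ⟨σ a, σ b, σ c, ?_, pMap_wt σ a b c⟩
    rw [act_permGL]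
    simpa [Equiv.Perm.inv_def, Equiv.symm_apply_apply] using hne

lemma isMinPt_pMap {σ : Equiv.Perm (Fin n)} {S : Set (Matrix (Fin n) (Fin n) ℝ)}
    {β : Matrix (Fin n) (Fin n) ℝ} (h : IsMinPt S β) : IsMinPt (pMap σ '' S) (pMap σ β) := by
  constructor
  · rw [← (pMap_isLinear σ).image_convexHull]
    exact ⟨β, h.1, rfl⟩
  · intro γ hγ
    rw [← (pMap_isLinear σ).image_convexHull] at hγ
    obtain ⟨γ', hγ', rfl⟩ := hγ
    rw [normsqM_pMap, normsqM_pMap]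
    exact h.2 γ' hγ'

lemma betaMu_act_permGL {μ : Vn n} (h : μ ≠ 0) (σ : Equiv.Perm (Fin n)) :
    betaMu (act (permGL σ) μ) = pMap σ (betaMu μ) := by
  apply betaMu_eq_of_isMinPt (act_ne_zero h (permGL σ))
  rw [wtSet_act_permGL]
  exact isMinPt_pMap (betaMu_spec h)

end Strata
namespace Strata

variable {n : ℕ}

def FminOf (S : Set (Matrix (Fin n) (Fin n) ℝ)) : Matrix (Fin n) (Fin n) ℝ :=
  Classical.epsilon fun β => β ∈ convexHull ℝ S ∧ ∀ γ ∈ convexHull ℝ S, normsqM β ≤ normsqM γ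

lemma betaMu_eq_FminOf (μ : Vn n) : betaMu μ = FminOf (wtSet μ) := rfl

def allWts : Set (Matrix (Fin n) (Fin n) ℝ) :=
  Set.range fun t : Fin n × Fin n × Fin n => wt t.1 t.2.1 t.2.2

lemma wtSet_subset_allWts (μ : Vn n) : wtSet μ ⊆ allWts := by
  rintro w ⟨i, j, k, _, rfl⟩; exact ⟨(i, j, k), rfl⟩

lemma betaMu_orbit_finite (μ : Vn n) :
    (Set.range fun g : GL (Fin n) ℝ => betaMu (act g μ)).Finite := by
  have h1 : (Set.range fun g : GL (Fin n) ℝ => betaMu (act g μ)) ⊆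
      FminOf '' {S : Set (Matrix (Fin n) (Fin n) ℝ) | S ⊆ allWts} := by
    rintro x ⟨g, rfl⟩
    exact ⟨wtSet (act g μ), wtSet_subset_allWts _, (betaMu_eq_FminOf _).symm⟩
  have h2 : (allWts (n := n)).Finite := Set.finite_range _
  exact (h2.finite_subsets.image FminOf).subset h1

lemma exists_max_beta (μ : Vn n) :
    ∃ g₀ : GL (Fin n) ℝ, ∀ g : GL (Fin n) ℝ,
      normM (betaMu (act g μ)) ≤ normM (betaMu (act g₀ μ)) := by
  have hfin := betaMu_orbit_finite μ
  have hne : hfin.toFinset.Nonempty := by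
    rw [Set.Finite.toFinset_nonempty]
    exact ⟨betaMu (act 1 μ), 1, rfl⟩
  obtain ⟨b, hb, hmax⟩ := hfin.toFinset.exists_max_image normM hne
  rw [Set.Finite.mem_toFinset] at hb
  obtain ⟨g₀, rfl⟩ := hb
  refine ⟨g₀, fun g => hmax _ ?_⟩
  rw [Set.Finite.mem_toFinset]
  exact ⟨g, rfl⟩

lemma normM_pMap (σ : Equiv.Perm (Fin n)) (α : Matrix (Fin n) (Fin n) ℝ) :
    normM (pMap σ α) = normM α := by
  rw [normM, normM, normsqM_pMap]

lemma exists_upperT_SS {μ : Vn n} (hμ : μ ≠ 0) (hsk : IsSkew μ) :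
    ∃ β, β ∈ upperT (n := n) ∧ μ ∈ SS β := by
  obtain ⟨g₀, hmax⟩ := exists_max_beta μ
  set ν := act g₀ μ with hν
  have hν0 : ν ≠ 0 := act_ne_zero hμ g₀
  set f : Fin n → ℝ := fun i => betaMu ν i i with hf
  set τ := Tuple.sort f with hτ
  set σ := τ⁻¹ with hσ
  set β := betaMu (act (permGL σ) ν) with hβ
  have hβeq : β = pMap σ (betaMu ν) := betaMu_act_permGL hν0 σ
  have hdiag : β.IsDiag := betaMu_isDiag (act_ne_zero hν0 _)
  have hmono : Monotone fun i => β i i := by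
    have he : (fun i => β i i) = f ∘ τ := by
      funext i
      rw [hβeq]
      show betaMu ν (σ⁻¹ i) (σ⁻¹ i) = f (τ i)
      rw [hσ, inv_inv]
    rw [he]
    exact Tuple.monotone_sort f
  refine ⟨β, ⟨hdiag, hmono⟩, hμ, hsk, ⟨permGL σ * g₀, by rw [← act_mul, ← hν, ← hβ]⟩, ?_⟩
  intro g
  calc normM (betaMu (act g μ)) ≤ normM (betaMu ν) := hmax g
    _ = normM β := by rw [hβeq, normM_pMap]

end Strata
namespace Strata

variable {n : ℕ}

def LowerTri (A : Matrix (Fin n) (Fin n) ℝ) : Prop := ∀ x y : Fin n, x < y → A x y = 0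

/-- Q-property: all weights in the support of ξ pair with α at least c. -/
def QProp (ξ : Vn n) (α : Matrix (Fin n) (Fin n) ℝ) (c : ℝ) : Prop :=
  ∀ i j k, ξ i j k ≠ 0 → c ≤ innM α (wt i j k)

lemma act_support {g : GL (Fin n) ℝ} {μ : Vn n} {i j k : Fin n} (h : act g μ i j k ≠ 0) :
    ∃ a b c, μ a b c ≠ 0 ∧ (↑g⁻¹ : Matrix (Fin n) (Fin n) ℝ) a i ≠ 0 ∧
      (↑g⁻¹ : Matrix (Fin n) (Fin n) ℝ) b j ≠ 0 ∧ (↑g : Matrix (Fin n) (Fin n) ℝ) k c ≠ 0 := by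
  rw [act] at h
  obtain ⟨a, _, ha⟩ := Finset.exists_ne_zero_of_sum_ne_zero h
  obtain ⟨b, _, hb⟩ := Finset.exists_ne_zero_of_sum_ne_zero ha
  obtain ⟨c, _, hc⟩ := Finset.exists_ne_zero_of_sum_ne_zero hb
  have h1 := mul_ne_zero_iff.mp hc
  have h2 := mul_ne_zero_iff.mp h1.1
  have h3 := mul_ne_zero_iff.mp h2.1
  exact ⟨a, b, c, h1.2, h3.1, h3.2, h2.2⟩

lemma QProp_act_lower {g : GL (Fin n) ℝ} (hg : LowerTri (↑g : Matrix (Fin n) (Fin n) ℝ))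
    (hg' : LowerTri (↑g⁻¹ : Matrix (Fin n) (Fin n) ℝ)) {α : Matrix (Fin n) (Fin n) ℝ}
    (hα : Monotone fun i => α i i) {ξ : Vn n} {c : ℝ} (h : QProp ξ α c) :
    QProp (act g ξ) α c := by
  intro i j k hne
  obtain ⟨a, b, c', hξ, ha, hb, hc⟩ := act_support hne
  have hia : i ≤ a := le_of_not_gt fun hlt => ha (hg' a i hlt)
  have hjb : j ≤ b := le_of_not_gt fun hlt => hb (hg' b j hlt)
  have hck : c' ≤ k := le_of_not_gt fun hlt => hc (hg k c' hlt)
  have hold := h a b c' hξ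
  rw [innM_wt] at hold ⊢
  have e1 : α i i ≤ α a a := hα hia
  have e2 : α j j ≤ α b b := hα hjb
  have e3 : α c' c' ≤ α k k := hα hck
  linarith

lemma QProp_act_perm {σ : Equiv.Perm (Fin n)} {ξ : Vn n} {α : Matrix (Fin n) (Fin n) ℝ} {c : ℝ}
    (h : QProp (act (permGL σ) ξ) α c) : QProp ξ (pMap σ⁻¹ α) c := by
  intro a b c' hne
  have h2 : act (permGL σ) ξ (σ a) (σ b) (σ c') ≠ 0 := by
    rw [act_permGL]
    simpa [Equiv.Perm.inv_def, Equiv.symm_apply_apply] using hne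
  have h3 := h _ _ _ h2
  rw [innM_wt] at h3
  rw [innM_wt]
  show c ≤ pMap σ⁻¹ α c' c' - pMap σ⁻¹ α a a - pMap σ⁻¹ α b b
  simp only [pMap, inv_inv]
  exact h3

lemma QProp_add {ξ : Vn n} {α α' : Matrix (Fin n) (Fin n) ℝ} {c c' : ℝ}
    (h : QProp ξ α c) (h' : QProp ξ α' c') : QProp ξ (α + α') (c + c') := by
  intro i j k hne
  rw [innM_add_left]
  exact add_le_add (h i j k hne) (h' i j k hne)

lemma QProp_self {ν : Vn n} (hν : ν ≠ 0) : QProp ν (betaMu ν) (normsqM (betaMu ν)) := by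
  intro i j k hne
  exact isMinPt_inner (betaMu_spec hν) (subset_convexHull ℝ _ ⟨i, j, k, hne, rfl⟩)

lemma QProp_bound {ν : Vn n} (hν : ν ≠ 0) {v : Matrix (Fin n) (Fin n) ℝ} {c : ℝ}
    (h : QProp ν v c) : c ≤ normM v * normM (betaMu ν) := by
  have h1 : ∀ w ∈ wtSet ν, c ≤ innM v w := by
    rintro w ⟨i, j, k, hne, rfl⟩; exact h i j k hne
  have h2 : c ≤ innM v (betaMu ν) := hull_inner_ge h1 _ (betaMu_spec hν).1
  exact h2.trans (innM_cauchySchwarz v (betaMu ν))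

end Strata
namespace Strata

variable {n : ℕ}

def elimL (w : Fin n → ℝ) (i0 : Fin n) : Matrix (Fin n) (Fin n) ℝ :=
  fun x y => if y = i0 ∧ i0 < x then w x else 0

def elimR (v : Fin n → ℝ) (j0 : Fin n) : Matrix (Fin n) (Fin n) ℝ :=
  fun x y => if x = j0 ∧ y < j0 then v y else 0

lemma lower_one : LowerTri (1 : Matrix (Fin n) (Fin n) ℝ) :=
  fun _ _ hxy => Matrix.one_apply_ne (ne_of_lt hxy)

lemma lower_mul {A B : Matrix (Fin n) (Fin n) ℝ} (hA : LowerTri A) (hB : LowerTri B) :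
    LowerTri (A * B) := by
  intro x y hxy
  rw [Matrix.mul_apply]
  apply Finset.sum_eq_zero
  intro z _
  by_cases hz : x < z
  · rw [hA x z hz, zero_mul]
  · rw [hB z y (lt_of_le_of_lt (le_of_not_gt hz) hxy), mul_zero]

lemma lower_add {A B : Matrix (Fin n) (Fin n) ℝ} (hA : LowerTri A) (hB : LowerTri B) :
    LowerTri (A + B) := by
  intro x y hxy
  rw [Matrix.add_apply, hA x y hxy, hB x y hxy, add_zero]

lemma lower_sub {A B : Matrix (Fin n) (Fin n) ℝ} (hA : LowerTri A) (hB : LowerTri B) :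
    LowerTri (A - B) := by
  intro x y hxy
  rw [Matrix.sub_apply, hA x y hxy, hB x y hxy, sub_zero]

lemma lower_elimL (w : Fin n → ℝ) (i0 : Fin n) : LowerTri (elimL w i0) := by
  intro x y hxy
  rw [elimL, if_neg]
  rintro ⟨rfl, h2⟩
  exact absurd (hxy.trans h2) (lt_irrefl x)

lemma lower_elimR (v : Fin n → ℝ) (j0 : Fin n) : LowerTri (elimR v j0) := by
  intro x y hxy
  rw [elimR, if_neg]
  rintro ⟨rfl, h2⟩
  exact absurd (h2.trans hxy) (lt_irrefl y)

lemma lower_diagonal (d : Fin n → ℝ) : LowerTri (Matrix.diagonal d) :=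
  fun _ _ hxy => Matrix.diagonal_apply_ne d (ne_of_lt hxy)

lemma elimL_mul (w : Fin n → ℝ) (i0 : Fin n) (X : Matrix (Fin n) (Fin n) ℝ) (x y : Fin n) :
    (elimL w i0 * X) x y = (if i0 < x then w x * X i0 y else 0) := by
  rw [Matrix.mul_apply]
  rw [Finset.sum_eq_single i0]
  · by_cases h : i0 < x
    · rw [elimL, if_pos ⟨rfl, h⟩, if_pos h]
    · rw [elimL, if_neg (fun hc => h hc.2), if_neg h, zero_mul]
  · intro b _ hb
    rw [elimL, if_neg (fun hc => hb hc.1), zero_mul]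
  · intro h; exact absurd (Finset.mem_univ _) h

lemma mul_elimR (X : Matrix (Fin n) (Fin n) ℝ) (v : Fin n → ℝ) (j0 : Fin n) (x y : Fin n) :
    (X * elimR v j0) x y = (if y < j0 then X x j0 * v y else 0) := by
  rw [Matrix.mul_apply]
  rw [Finset.sum_eq_single j0]
  · by_cases h : y < j0
    · rw [elimR, if_pos ⟨rfl, h⟩, if_pos h]
    · rw [elimR, if_neg (fun hc => h hc.2), if_neg h, mul_zero]
  · intro b _ hb
    rw [elimR, if_neg (fun hc => hb hc.1), mul_zero]
  · intro h; exact absurd (Finset.mem_univ _) h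

lemma elimL_sq (w w' : Fin n → ℝ) (i0 : Fin n) : elimL w i0 * elimL w' i0 = 0 := by
  funext x y
  rw [elimL_mul]
  by_cases h : i0 < x
  · rw [if_pos h, elimL, if_neg (fun hc => lt_irrefl i0 hc.2), mul_zero]
    rfl
  · rw [if_neg h]; rfl

lemma elimR_sq (v v' : Fin n → ℝ) (j0 : Fin n) : elimR v j0 * elimR v' j0 = 0 := by
  funext x y
  rw [mul_elimR]
  by_cases h : y < j0
  · rw [if_pos h, elimR, if_neg (fun hc => lt_irrefl j0 hc.2), zero_mul]
    rfl
  · rw [if_neg h]; rfl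

lemma one_add_mul_one_sub {E : Matrix (Fin n) (Fin n) ℝ} (h : E * E = 0) :
    (1 + E) * (1 - E) = 1 := by
  rw [mul_sub, add_mul, add_mul, one_mul, one_mul, mul_one, h]
  abel

lemma one_sub_mul_one_add {E : Matrix (Fin n) (Fin n) ℝ} (h : E * E = 0) :
    (1 - E) * (1 + E) = 1 := by
  rw [mul_add, sub_mul, sub_mul, one_mul, one_mul, mul_one, h]
  abel

end Strata
namespace Strata

variable {n : ℕ}

lemma mul_mul_cancel {A B : Matrix (Fin n) (Fin n) ℝ} (h : A * B = 1)
    (Z : Matrix (Fin n) (Fin n) ℝ) : A * (B * Z) = Z := by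
  rw [← mul_assoc, h, one_mul]

def BruhatData (M : Matrix (Fin n) (Fin n) ℝ) (m : ℕ) : Prop :=
  ∃ L B Li Bi : Matrix (Fin n) (Fin n) ℝ, ∃ φ : Fin n → Fin n,
    LowerTri L ∧ LowerTri B ∧ LowerTri Li ∧ LowerTri Bi ∧
    L * Li = 1 ∧ Li * L = 1 ∧ B * Bi = 1 ∧ Bi * B = 1 ∧
    (∀ j j' : Fin n, m ≤ j.val → m ≤ j'.val → φ j = φ j' → j = j') ∧
    (∀ j : Fin n, m ≤ j.val →
      (∀ x, (L * M * B) x j = if x = φ j then 1 else 0) ∧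
      (∀ k, k ≠ j → (L * M * B) (φ j) k = 0))

lemma bruhat_base (M : Matrix (Fin n) (Fin n) ℝ) : BruhatData M n :=
  ⟨1, 1, 1, 1, id, lower_one, lower_one, lower_one, lower_one,
    one_mul 1, one_mul 1, one_mul 1, one_mul 1,
    fun j _ hj => absurd hj (not_le.mpr j.isLt),
    fun j hj => absurd hj (not_le.mpr j.isLt)⟩

lemma bruhat_step {M : Matrix (Fin n) (Fin n) ℝ} (hM : IsUnit M) (m : ℕ)
    (h : BruhatData M (m + 1)) : BruhatData M m := by
  obtain ⟨L, B, Li, Bi, φ, hL, hB, hLi, hBi, hLLi, hLiL, hBBi, hBiB, hinj, hprop⟩ := h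
  by_cases hm : m < n
  swap
  · refine ⟨L, B, Li, Bi, φ, hL, hB, hLi, hBi, hLLi, hLiL, hBBi, hBiB, ?_, ?_⟩
    · intro j j' hj _ _
      exact absurd hj (not_le.mpr (lt_of_lt_of_le j.isLt (not_lt.mp hm)))
    · intro j hj
      exact absurd hj (not_le.mpr (lt_of_lt_of_le j.isLt (not_lt.mp hm)))
  set jm : Fin n := ⟨m, hm⟩ with hjmdef
  have jmval : (jm : Fin n).val = m := rfl
  set N := L * M * B with hNdef
  have hdetL : L.det ≠ 0 := by
    have h1 : L.det * Li.det = 1 := by rw [← Matrix.det_mul, hLLi, Matrix.det_one]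
    exact left_ne_zero_of_mul_eq_one h1
  have hdetB : B.det ≠ 0 := by
    have h1 : B.det * Bi.det = 1 := by rw [← Matrix.det_mul, hBBi, Matrix.det_one]
    exact left_ne_zero_of_mul_eq_one h1
  have hdetM : M.det ≠ 0 := ((Matrix.isUnit_iff_isUnit_det M).mp hM).ne_zero
  have hdetN : N.det ≠ 0 := by
    rw [hNdef, Matrix.det_mul, Matrix.det_mul]
    exact mul_ne_zero (mul_ne_zero hdetL hdetM) hdetB
  have hcol : ∃ x, N x jm ≠ 0 := by
    by_contra hc
    push_neg at hc
    exact hdetN (Matrix.det_eq_zero_of_column_eq_zero jm hc)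
  obtain ⟨x0, hx0⟩ := hcol
  set S : Finset (Fin n) := Finset.univ.filter (fun x => N x jm ≠ 0) with hS
  have hSne : S.Nonempty := ⟨x0, by rw [hS]; simp [hx0]⟩
  set i0 := S.min' hSne with hi0
  have hpiv : N i0 jm ≠ 0 := by
    have h1 : i0 ∈ S := S.min'_mem hSne
    exact (Finset.mem_filter.mp h1).2
  have hminp : ∀ x, N x jm ≠ 0 → i0 ≤ x := fun x hx => S.min'_le x (by rw [hS]; simp [hx])
  have fact3 : ∀ x, x < i0 → N x jm = 0 := by
    intro x hx
    by_contra hne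
    exact absurd (hminp x hne) (not_le.mpr hx)
  have hjmne : ∀ j : Fin n, m + 1 ≤ j.val → jm ≠ j := by
    intro j hj he
    have := congrArg Fin.val he
    rw [jmval] at this
    omega
  have factrow : ∀ j : Fin n, m + 1 ≤ j.val → N (φ j) jm = 0 :=
    fun j hj => (hprop j hj).2 jm (hjmne j hj)
  have fact1 : ∀ j : Fin n, m + 1 ≤ j.val → φ j ≠ i0 := by
    intro j hj he
    exact hpiv (he ▸ factrow j hj)
  have fact2 : ∀ j : Fin n, m + 1 ≤ j.val → N i0 j = 0 := by
    intro j hj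
    rw [(hprop j hj).1 i0, if_neg (fun he => fact1 j hj he.symm)]
  set piv := N i0 jm with hpivdef
  set w : Fin n → ℝ := fun x => -(N x jm) / piv with hw
  set A := (1 : Matrix (Fin n) (Fin n) ℝ) + elimL w i0 with hA
  set Ai := (1 : Matrix (Fin n) (Fin n) ℝ) - elimL w i0 with hAi
  have hAAi : A * Ai = 1 := one_add_mul_one_sub (elimL_sq w w i0)
  have hAiA : Ai * A = 1 := one_sub_mul_one_add (elimL_sq w w i0)
  set D := Matrix.diagonal (fun x : Fin n => if x = i0 then piv⁻¹ else 1) with hD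
  set Di := Matrix.diagonal (fun x : Fin n => if x = i0 then piv else 1) with hDi
  have hDDi : D * Di = 1 := by
    rw [hD, hDi, Matrix.diagonal_mul_diagonal]
    have he : (fun i : Fin n => (if i = i0 then piv⁻¹ else 1) * if i = i0 then piv else 1)
        = fun _ : Fin n => (1:ℝ) := funext fun x => by
      by_cases hx : x = i0
      · simp [hx, inv_mul_cancel₀ hpiv]
      · simp [hx]
    rw [he, Matrix.diagonal_one]
  have hDiD : Di * D = 1 := by
    rw [hD, hDi, Matrix.diagonal_mul_diagonal]
    have he : (fun i : Fin n => (if i = i0 then piv else 1) * if i = i0 then piv⁻¹ else 1)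
        = fun _ : Fin n => (1:ℝ) := funext fun x => by
      by_cases hx : x = i0
      · simp [hx, mul_inv_cancel₀ hpiv]
      · simp [hx]
    rw [he, Matrix.diagonal_one]
  set N2 := D * (A * N) with hN2def
  have hN2 : ∀ x y, N2 x y
      = (if x = i0 then piv⁻¹ else 1) * (N x y + (if i0 < x then w x * N i0 y else 0)) := by
    intro x y
    rw [hN2def, Matrix.diagonal_mul]
    congr 1
    rw [hA, Matrix.add_mul, Matrix.one_mul, Matrix.add_apply, elimL_mul]
  have hN2coljm : ∀ x, N2 x jm = if x = i0 then 1 else 0 := by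
    intro x
    rw [hN2]
    by_cases hx : x = i0
    · subst hx
      rw [if_pos rfl, if_pos rfl, if_neg (lt_irrefl _), add_zero]
      exact inv_mul_cancel₀ hpiv
    · rw [if_neg hx, if_neg hx, one_mul]
      by_cases hlt : i0 < x
      · rw [if_pos hlt]
        show N x jm + -(N x jm) / piv * N i0 jm = 0
        rw [← hpivdef, div_mul_cancel₀ _ hpiv, add_neg_cancel]
      · rw [if_neg hlt, add_zero]
        exact fact3 x (lt_of_le_of_ne (le_of_not_gt hlt) hx)
  have hN2col : ∀ j : Fin n, m + 1 ≤ j.val → ∀ x, N2 x j = if x = φ j then 1 else 0 := by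
    intro j hj x
    rw [hN2]
    by_cases hx : x = i0
    · subst hx
      simp [fact2 j hj, Ne.symm (fact1 j hj)]
    · rw [if_neg hx, one_mul, (hprop j hj).1 x, fact2 j hj]
      by_cases hlt : i0 < x
      · rw [if_pos hlt, mul_zero, add_zero]
      · rw [if_neg hlt, add_zero]
  have hN2row : ∀ j : Fin n, m + 1 ≤ j.val → ∀ k, k ≠ j → N2 (φ j) k = 0 := by
    intro j hj k hk
    have hwz : w (φ j) = 0 := by
      show -(N (φ j) jm) / piv = 0
      rw [factrow j hj]
      simp
    rw [hN2, if_neg (fact1 j hj), one_mul, (hprop j hj).2 k hk]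
    simp [hwz]
  set v : Fin n → ℝ := fun z => -(N2 i0 z) with hv
  set F := elimR v jm with hF
  have hFF : F * F = 0 := by rw [hF]; exact elimR_sq v v jm
  set N3 := N2 * (1 + F) with hN3def
  have hN3 : ∀ x y, N3 x y = N2 x y + (if y < jm then N2 x jm * v y else 0) := by
    intro x y
    rw [hN3def, Matrix.mul_add, Matrix.mul_one, Matrix.add_apply, hF, mul_elimR]
  have hcoljm : ∀ x, N3 x jm = if x = i0 then 1 else 0 := by
    intro x
    rw [hN3, if_neg (lt_irrefl jm), add_zero, hN2coljm]
  have hcolproc : ∀ j : Fin n, m + 1 ≤ j.val → ∀ x, N3 x j = if x = φ j then 1 else 0 := by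
    intro j hj x
    have hnotlt : ¬(j < jm) := by
      rw [Fin.lt_def, jmval]
      omega
    rw [hN3, if_neg hnotlt, add_zero]
    exact hN2col j hj x
  have hrowi0 : ∀ k, k ≠ jm → N3 i0 k = 0 := by
    intro k hk
    rw [hN3]
    by_cases hlt : k < jm
    · rw [if_pos hlt, hN2coljm, if_pos rfl, one_mul]
      show N2 i0 k + -(N2 i0 k) = 0
      exact add_neg_cancel _
    · rw [if_neg hlt, add_zero]
      have hkv : m + 1 ≤ k.val := by
        rw [Fin.lt_def, jmval] at hlt
        have h2 : k.val ≠ m := by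
          intro he
          exact hk (Fin.ext (by rw [he, jmval]))
        omega
      simp [hN2, fact2 k hkv]
  have hrowproc : ∀ j : Fin n, m + 1 ≤ j.val → ∀ k, k ≠ j → N3 (φ j) k = 0 := by
    intro j hj k hk
    have hz : N2 (φ j) jm = 0 := by rw [hN2coljm, if_neg (fact1 j hj)]
    rw [hN3]
    by_cases hlt : k < jm
    · rw [if_pos hlt, hz, zero_mul, add_zero]
      exact hN2row j hj k hk
    · rw [if_neg hlt, add_zero]
      exact hN2row j hj k hk
  -- assemble
  set L' := D * (A * L) with hL'
  set B' := B * (1 + F) with hB'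
  set Li' := Li * (Ai * Di) with hLi'
  set Bi' := (1 - F) * Bi with hBi'
  have hNfin : L' * M * B' = N3 := by
    rw [hL', hB', hN3def, hN2def, hNdef]
    simp only [mul_assoc]
  have hLLi' : L' * Li' = 1 := by
    rw [hL', hLi']
    rw [mul_assoc D (A * L) _, mul_assoc A L _, mul_mul_cancel hLLi,
      ← mul_assoc A Ai Di, hAAi, one_mul, hDDi]
  have hLi'L : Li' * L' = 1 := by
    rw [hL', hLi']
    rw [mul_assoc Li (Ai * Di) _, mul_assoc Ai Di _, mul_mul_cancel hDiD,
      ← mul_assoc Ai A L, hAiA, one_mul, hLiL]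
  have hBBi' : B' * Bi' = 1 := by
    rw [hB', hBi']
    rw [mul_assoc B (1 + F) _, ← mul_assoc (1 + F) (1 - F) Bi,
      one_add_mul_one_sub hFF, one_mul, hBBi]
  have hBi'B : Bi' * B' = 1 := by
    rw [hB', hBi']
    rw [mul_assoc (1 - F) Bi _, mul_mul_cancel hBiB, one_sub_mul_one_add hFF]
  have hAlow : LowerTri A := by
    rw [hA]; exact lower_add lower_one (lower_elimL w i0)
  have hAilow : LowerTri Ai := by
    rw [hAi]; exact lower_sub lower_one (lower_elimL w i0)
  have hFlow : LowerTri F := by rw [hF]; exact lower_elimR v jm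
  have hL'low : LowerTri L' := by
    rw [hL']; exact lower_mul (hD ▸ lower_diagonal _) (lower_mul hAlow hL)
  have hLi'low : LowerTri Li' := by
    rw [hLi']; exact lower_mul hLi (lower_mul hAilow (hDi ▸ lower_diagonal _))
  have hB'low : LowerTri B' := by
    rw [hB']; exact lower_mul hB (lower_add lower_one hFlow)
  have hBi'low : LowerTri Bi' := by
    rw [hBi']; exact lower_mul (lower_sub lower_one hFlow) hBi
  have hval_of_ne : ∀ j : Fin n, m ≤ j.val → j ≠ jm → m + 1 ≤ j.val := by
    intro j hj hne
    have h2 : j.val ≠ m := by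
      intro he
      exact hne (Fin.ext (by rw [he, jmval]))
    omega
  refine ⟨L', B', Li', Bi', Function.update φ jm i0,
    hL'low, hB'low, hLi'low, hBi'low, hLLi', hLi'L, hBBi', hBi'B, ?_, ?_⟩
  · intro j j' hj hj' he
    by_cases h1 : j = jm
    · by_cases h2 : j' = jm
      · rw [h1, h2]
      · subst h1
        rw [Function.update_self, Function.update_of_ne h2] at he
        exact absurd he.symm (fact1 j' (hval_of_ne j' hj' h2))
    · by_cases h2 : j' = jm
      · subst h2
        rw [Function.update_self, Function.update_of_ne h1] at he
        exact absurd he (fact1 j (hval_of_ne j hj h1))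
      · rw [Function.update_of_ne h1, Function.update_of_ne h2] at he
        exact hinj j j' (hval_of_ne j hj h1) (hval_of_ne j' hj' h2) he
  · intro j hj
    by_cases h1 : j = jm
    · subst h1
      constructor
      · intro x
        rw [hNfin, Function.update_self]
        exact hcoljm x
      · intro k hk
        rw [hNfin, Function.update_self]
        exact hrowi0 k hk
    · constructor
      · intro x
        rw [hNfin, Function.update_of_ne h1]
        exact hcolproc j (hval_of_ne j hj h1) x
      · intro k hk
        rw [hNfin, Function.update_of_ne h1]
        exact hrowproc j (hval_of_ne j hj h1) k hk

lemma bruhat_zero {M : Matrix (Fin n) (Fin n) ℝ} (hM : IsUnit M) : BruhatData M 0 := by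
  have key : ∀ d : ℕ, BruhatData M (n - d) := by
    intro d
    induction d with
    | zero => exact bruhat_base M
    | succ d ih =>
      rcases le_or_gt n d with h | h
      · have he : n - (d + 1) = n - d := by omega
        rw [he]
        exact ih
      · have he : n - (d + 1) + 1 = n - d := by omega
        exact bruhat_step hM _ (he ▸ ih)
  have := key n
  rwa [Nat.sub_self] at this

lemma bruhat_GL (g : GL (Fin n) ℝ) : ∃ l b : GL (Fin n) ℝ, ∃ σ : Equiv.Perm (Fin n),
    LowerTri (↑l : Matrix (Fin n) (Fin n) ℝ) ∧ LowerTri (↑l⁻¹ : Matrix (Fin n) (Fin n) ℝ) ∧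
    LowerTri (↑b : Matrix (Fin n) (Fin n) ℝ) ∧ LowerTri (↑b⁻¹ : Matrix (Fin n) (Fin n) ℝ) ∧
    g = l * permGL σ * b := by
  have hM : IsUnit (↑g : Matrix (Fin n) (Fin n) ℝ) := ⟨g, rfl⟩
  obtain ⟨L, B, Li, Bi, φ, hL, hB, hLi, hBi, hLLi, hLiL, hBBi, hBiB, hinj, hprop⟩ :=
    bruhat_zero hM
  set M := (↑g : Matrix (Fin n) (Fin n) ℝ) with hMdef
  have hinj' : Function.Injective φ :=
    fun j j' he => hinj j j' (Nat.zero_le _) (Nat.zero_le _) he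
  have hbij : Function.Bijective φ := (Finite.injective_iff_bijective).mp hinj'
  set σ : Equiv.Perm (Fin n) := Equiv.ofBijective φ hbij with hσ
  have hP : L * M * B = permM σ := by
    funext x y
    rw [(hprop y (Nat.zero_le _)).1 x]
    rfl
  have hM2 : M = Li * permM σ * Bi := by
    have h1 : Li * (L * M * B) = M * B := by
      rw [show L * M * B = L * (M * B) from by rw [mul_assoc], ← mul_assoc, hLiL, one_mul]
    have h2 : Li * (L * M * B) * Bi = M := by
      rw [h1, mul_assoc, hBBi, mul_one]
    rw [← h2, hP]
  refine ⟨⟨Li, L, hLiL, hLLi⟩, ⟨Bi, B, hBiB, hBBi⟩, σ, hLi, ?_, hBi, ?_, ?_⟩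
  · exact hL
  · exact hB
  · apply Units.ext
    show M = Li * permM σ * Bi
    exact hM2

end Strata
namespace Strata

variable {n : ℕ}

lemma SS_unique {μ : Vn n} (hμ : μ ≠ 0) {β₁ β₂ : Matrix (Fin n) (Fin n) ℝ}
    (h1 : β₁ ∈ upperT (n := n) ∧ μ ∈ SS β₁) (h2 : β₂ ∈ upperT (n := n) ∧ μ ∈ SS β₂) :
    β₁ = β₂ := by
  obtain ⟨⟨hd1, hm1⟩, _, _, ⟨g₁, hg₁⟩, hmax1⟩ := h1
  obtain ⟨⟨hd2, hm2⟩, _, _, ⟨g₂, hg₂⟩, hmax2⟩ := h2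
  have hnrm12 : normM β₁ = normM β₂ := le_antisymm (hg₁ ▸ hmax2 g₁) (hg₂ ▸ hmax1 g₂)
  set s := normM β₁ with hs
  rcases eq_or_lt_of_le (normM_nonneg β₁) with hs0 | hspos
  · -- s = 0 : both β are 0
    have hb1 : β₁ = 0 := (normM_eq_zero_iff β₁).mp hs0.symm
    have hb2 : β₂ = 0 := (normM_eq_zero_iff β₂).mp (by rw [← hnrm12, hs]; exact hs0.symm)
    rw [hb1, hb2]
  -- s > 0
  have hs2 : normsqM β₁ = s ^ 2 := (normM_sq β₁).symm
  have hs2' : normsqM β₂ = s ^ 2 := by rw [← normM_sq β₂, ← hnrm12]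
  set ν := act g₁ μ with hν
  have hν0 : ν ≠ 0 := act_ne_zero hμ g₁
  have hQ1 : QProp ν β₁ (s ^ 2) := by
    have h := QProp_self hν0
    rw [hg₁, hs2] at h
    exact h
  have hQ2 : QProp (act g₂ μ) β₂ (s ^ 2) := by
    have h := QProp_self (act_ne_zero hμ g₂)
    rw [hg₂, hs2'] at h
    exact h
  obtain ⟨l, b, σ, hlLow, hliLow, hbLow, hbiLow, hdecomp⟩ := bruhat_GL (g₂ * g₁⁻¹)
  have hh : l * permGL σ * b * g₁ = g₂ := by
    rw [← hdecomp]
    exact inv_mul_cancel_right g₂ g₁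
  have e : act l (act (permGL σ) (act b ν)) = act g₂ μ := by
    rw [hν, act_mul, act_mul, act_mul, hh]
  rw [← e] at hQ2
  have hQX : QProp (act (permGL σ) (act b ν)) β₂ (s ^ 2) := by
    have h := QProp_act_lower (g := l⁻¹) hliLow
      (by rw [inv_inv]; exact hlLow) hm2 hQ2
    rwa [act_mul, inv_mul_cancel, act_one] at h
  have hQperm : QProp (act b ν) (pMap σ⁻¹ β₂) (s ^ 2) := QProp_act_perm hQX
  have hQ1' : QProp (act b ν) β₁ (s ^ 2) := QProp_act_lower hbLow hbiLow hm1 hQ1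
  set ξ := act b ν with hξ
  set β₂' := pMap σ⁻¹ β₂ with hβ₂'
  have hβ₂'normsq : normsqM β₂' = s ^ 2 := by rw [hβ₂', normsqM_pMap, hs2']
  have hξ0 : ξ ≠ 0 := act_ne_zero hν0 b
  -- β₁ = β₂'
  have heq : β₁ = β₂' := by
    by_contra hne'
    have hsum : QProp ξ (β₁ + β₂') (s ^ 2 + s ^ 2) := QProp_add hQ1' hQperm
    have hbound := QProp_bound hξ0 hsum
    have hmaxξ : normM (betaMu ξ) ≤ s := by
      have hξ2 : ξ = act (b * g₁) μ := by rw [hξ, hν, act_mul]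
      rw [hξ2, hs]
      exact hmax1 (b * g₁)
    have hip : innM β₁ β₂' < s ^ 2 := by
      have hd := normsq_sub β₁ β₂'
      have hdpos : 0 < normsqM (β₁ - β₂') := by
        rcases lt_or_eq_of_le (normsqM_nonneg (β₁ - β₂')) with h | h
        · exact h
        · exact absurd (sub_eq_zero.mp ((normsqM_eq_zero_iff _).mp h.symm)) hne'
      linarith
    have hnsq : normsqM (β₁ + β₂') < (2 * s) ^ 2 := by
      have hadd := normsq_add β₁ β₂'
      nlinarith
    have hnrm : normM (β₁ + β₂') < 2 * s := by
      have h := Real.sqrt_lt_sqrt (normsqM_nonneg (β₁ + β₂')) hnsq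
      rwa [Real.sqrt_sq (by positivity)] at h
    nlinarith [hbound, hmaxξ, hnrm, normM_nonneg (betaMu ξ), normM_nonneg (β₁ + β₂')]
  -- conclude β₁ = β₂ via monotone diagonals
  have hpt : ∀ i, β₁ i i = β₂ (σ i) (σ i) := by
    intro i
    rw [heq, hβ₂']
    show β₂ (σ⁻¹⁻¹ i) (σ⁻¹⁻¹ i) = β₂ (σ i) (σ i)
    rw [inv_inv]
  have huniq : (fun i => β₂ i i) ∘ σ = (fun i => β₂ i i) ∘ (1 : Equiv.Perm (Fin n)) := by
    apply Tuple.unique_monotone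
    · have hcomp : (fun i => β₂ i i) ∘ σ = fun i => β₁ i i :=
        funext fun i => (hpt i).symm
      rw [hcomp]
      exact hm1
    · simpa using hm2
  have hdiag : ∀ i, β₁ i i = β₂ i i := by
    intro i
    have := congrFun huniq i
    simp only [Function.comp_apply, Equiv.Perm.coe_one, id_eq] at this
    rw [hpt i, this]
  funext x y
  by_cases hxy : x = y
  · subst hxy
    exact hdiag x
  · rw [hd1 hxy, hd2 hxy]

end Strata

/-- **Theorem 2.10 (i).** V_n∖{0} is the disjoint union of the strata: every nonzero
μ ∈ V_n belongs to S_β for exactly one β in the closed Weyl chamber. -/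
theorem strata_disjoint_cover {n : ℕ} (μ : Vn n) (hμ : μ ≠ 0) (hsk : IsSkew μ) :
    ∃! β : Matrix (Fin n) (Fin n) ℝ, β ∈ upperT (n := n) ∧ μ ∈ SS β := by
  obtain ⟨β, hβ⟩ := Strata.exists_upperT_SS hμ hsk
  exact ⟨β, hβ, fun β' hβ' => Strata.SS_unique hμ hβ' hβ⟩

end
end
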